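/- arXiv:1107.2875 — 8 statements merged into one kernel-verified Lean document; each statement's English description precedes it below -/
import Mathlib

section
/- Let n ≥ 2 and u = (u_1,...,u_n) ∈ ℕ^n. The number of monomials x^a y^b z^c in the polynomial ring K[x_1,y_1,z_1,...,x_n,y_n,z_n] of multidegree u (i.e., a_i+b_i+c_i = u_i for each i) that are NOT divisible by any of the monomials x_i x_j, x_i y_j y_k, or y_i y_j y_k y_l (for distinct indices i,j,k,l in [n]) equals C(u_1+...+u_n+3, 3) - Σ_{i=1}^n C(u_i+2, 3). -/
/-!
Give `x_i` weight 2, `y_i` weight 1 and `z_i` weight 0, and let the weight of a monomial be the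
sum over `i` of the largest weight of a variable of index `i` dividing it. The generators of `M_n`
are exactly the products of weight 4 whose variables have distinct indices, so a monomial lies
outside `M_n` iff its weight is at most 3.

Counting by weight, the monomials of multidegree `u` have generating polynomial
`∏ i, (1 + u_i t + C(u_i+1,2) t²)`. Each factor agrees with `(1 - t)^(-u_i)` up to `t²` and falls
short of it by `C(u_i+2,3) t³` in degree 3, so the coefficients of `t⁰, …, t³` are
`C(s-1+k, k)` for `k ≤ 2` and `C(s+2,3) - Σ C(u_i+2,3)` for `k = 3`, where `s = Σ u_i`.
Their sum is the claimed count.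
-/

open Finset Polynomial

namespace StandardMonomial

lemma cast_add_one_choose_two (n : ℕ) : ((n + 1).choose 2 : ℚ) = (n + 1) * n / 2 := by
  rw [Nat.cast_choose_two]
  push_cast
  ring

lemma cast_add_two_choose_three (n : ℕ) :
    ((n + 2).choose 3 : ℚ) = (n + 2) * (n + 1) * n / 6 := by
  have h : ((n + 2).choose 3 * 3 : ℚ) = (n + 2) * (n + 1).choose 2 := by
    exact_mod_cast (Nat.add_one_mul_choose_eq (n + 1) 2).symm
  rw [cast_add_one_choose_two] at h
  linear_combination h / 3

lemma add_add_one_choose_two (a b : ℕ) :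
    (a + b + 1).choose 2 = (a + 1).choose 2 + a * b + (b + 1).choose 2 := by
  qify
  rw [cast_add_one_choose_two, cast_add_one_choose_two, cast_add_one_choose_two]
  push_cast
  ring

lemma add_add_two_choose_three (a b : ℕ) :
    (a + b + 2).choose 3 =
      (a + 2).choose 3 + a * (b + 1).choose 2 + (a + 1).choose 2 * b + (b + 2).choose 3 := by
  qify
  rw [cast_add_two_choose_three, cast_add_two_choose_three, cast_add_two_choose_three,
    cast_add_one_choose_two, cast_add_one_choose_two]
  push_cast
  ring

lemma sum_range_sub_eq_choose_two (m : ℕ) : ∑ k ∈ range m, (m - k) = (m + 1).choose 2 := by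
  induction m with
  | zero => simp
  | succ m ih =>
    rw [sum_range_succ', Nat.choose_succ_succ', Nat.choose_one_right, ← ih]
    simp only [Nat.add_sub_add_right, Nat.sub_zero]
    ring

lemma card_filter_le_eq_sum_coeff {α : Type*} (S : Finset α) (w : α → ℕ) (d : ℕ) :
    #{x ∈ S | w x ≤ d} = ∑ k ∈ range (d + 1), (∑ x ∈ S, (X : ℕ[X]) ^ w x).coeff k := by
  simp only [finsetSum_coeff, coeff_X_pow]
  rw [sum_comm, card_filter]
  refine sum_congr rfl fun x _ => ?_
  simp only [sum_ite_eq', mem_range, Nat.lt_succ_iff]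

lemma sum_piFinset_pow_sum {ι κ R : Type*} [Fintype ι] [DecidableEq ι] [CommSemiring R]
    (t : ι → Finset κ) (w : κ → ℕ) (a : R) :
    ∑ p ∈ Fintype.piFinset t, a ^ ∑ i, w (p i) = ∏ i, ∑ h ∈ t i, a ^ w h := by
  simp only [prod_univ_sum, prod_pow_eq_pow_sum]

def weight (x y : ℕ) : ℕ := if 1 ≤ x then 2 else if 1 ≤ y then 1 else 0

lemma weight_of_one_le {x : ℕ} (y : ℕ) (hx : 1 ≤ x) : weight x y = 2 := if_pos hx

lemma weight_zero_left (y : ℕ) : weight 0 y = if 1 ≤ y then 1 else 0 := rfl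

lemma one_le_weight {x y : ℕ} (hy : 1 ≤ y) : 1 ≤ weight x y := by
  unfold weight
  split_ifs <;> omega

section Divisibility

variable {ι : Type*} [DecidableEq ι]

lemma card_le_three_of_not_exists {s : Finset ι}
    (h : ¬ ∃ i j k l, i ≠ j ∧ i ≠ k ∧ i ≠ l ∧ j ≠ k ∧ j ≠ l ∧ k ≠ l ∧
      i ∈ s ∧ j ∈ s ∧ k ∈ s ∧ l ∈ s) : #s ≤ 3 := by
  by_contra! hs
  obtain ⟨i, hi⟩ : s.Nonempty := card_pos.mp (by omega)
  obtain ⟨j, k, l, hj, hk, hl, hjk, hjl, hkl⟩ :=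
    two_lt_card_iff.mp (show 2 < #(s.erase i) by rw [card_erase_of_mem hi]; omega)
  exact h ⟨i, j, k, l, (ne_of_mem_erase hj).symm, (ne_of_mem_erase hk).symm,
    (ne_of_mem_erase hl).symm, hjk, hjl, hkl, hi, mem_of_mem_erase hj, mem_of_mem_erase hk,
    mem_of_mem_erase hl⟩

variable [Fintype ι]

theorem sum_weight_le_three_iff (a b : ι → ℕ) :
    ∑ i, weight (a i) (b i) ≤ 3 ↔
      ¬ (∃ i j, i ≠ j ∧ 1 ≤ a i ∧ 1 ≤ a j) ∧
      ¬ (∃ i j k, i ≠ j ∧ i ≠ k ∧ j ≠ k ∧ 1 ≤ a i ∧ 1 ≤ b j ∧ 1 ≤ b k) ∧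
      ¬ (∃ i j k l, i ≠ j ∧ i ≠ k ∧ i ≠ l ∧ j ≠ k ∧ j ≠ l ∧ k ≠ l ∧
          1 ≤ b i ∧ 1 ≤ b j ∧ 1 ≤ b k ∧ 1 ≤ b l) := by
  have sum_le (s : Finset ι) : ∑ i ∈ s, weight (a i) (b i) ≤ ∑ i, weight (a i) (b i) :=
    sum_le_sum_of_subset (subset_univ s)
  constructor
  · intro hw
    refine ⟨?_, ?_, ?_⟩
    · rintro ⟨i, j, hij, hi, hj⟩
      have := sum_le {i, j}
      rw [sum_pair hij, weight_of_one_le _ hi, weight_of_one_le _ hj] at this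
      omega
    · rintro ⟨i, j, k, hij, hik, hjk, hi, hj, hk⟩
      have := sum_le {i, j, k}
      rw [sum_insert (by simp [hij, hik]), sum_pair hjk, weight_of_one_le _ hi] at this
      have := one_le_weight (x := a j) hj
      have := one_le_weight (x := a k) hk
      omega
    · rintro ⟨i, j, k, l, hij, hik, hil, hjk, hjl, hkl, hi, hj, hk, hl⟩
      have := sum_le {i, j, k, l}
      rw [sum_insert (by simp [hij, hik, hil]), sum_insert (by simp [hjk, hjl]),
        sum_pair hkl] at this
      have := one_le_weight (x := a i) hi
      have := one_le_weight (x := a j) hj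
      have := one_le_weight (x := a k) hk
      have := one_le_weight (x := a l) hl
      omega
  · rintro ⟨hA, hAB, hB⟩
    by_cases ha : ∃ i, 1 ≤ a i
    · obtain ⟨i, hi⟩ := ha
      have rest : ∑ j ∈ univ.erase i, weight (a j) (b j) = #{j ∈ univ.erase i | 1 ≤ b j} := by
        rw [card_filter]
        refine sum_congr rfl fun j hj => ?_
        have : a j = 0 := by
          by_contra h
          exact hA ⟨i, j, (ne_of_mem_erase hj).symm, hi, by omega⟩
        rw [this, weight_zero_left]
      have : #{j ∈ univ.erase i | 1 ≤ b j} ≤ 1 := card_le_one.mpr fun j hj k hk => by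
        simp only [mem_filter, mem_erase] at hj hk
        by_contra hjk
        exact hAB ⟨i, j, k, hj.1.1.symm, hk.1.1.symm, hjk, hi, hj.2, hk.2⟩
      rw [← add_sum_erase _ _ (mem_univ i), weight_of_one_le _ hi, rest]
      omega
    · have ha' : ∀ i, a i = 0 := fun i => by have := not_exists.mp ha i; omega
      simp only [ha', weight_zero_left, sum_boole, Nat.cast_id]
      exact card_le_three_of_not_exists (by simpa using hB)

end Divisibility

def triples (m : ℕ) : Finset (ℕ × ℕ × ℕ) :=
  {h ∈ range (m + 1) ×ˢ range (m + 1) ×ˢ range (m + 1) | h.1 + h.2.1 + h.2.2 = m}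

lemma mem_triples {m : ℕ} {h : ℕ × ℕ × ℕ} : h ∈ triples m ↔ h.1 + h.2.1 + h.2.2 = m := by
  simp only [triples, mem_filter, mem_product, mem_range]
  omega

noncomputable def weightPoly (m : ℕ) : ℕ[X] := 1 + C m * X + C ((m + 1).choose 2) * X ^ 2

theorem sum_triples_X_pow_weight (m : ℕ) :
    ∑ h ∈ triples m, X ^ weight h.1 h.2.1 = weightPoly m := by
  rw [sum_finset_product _ (range (m + 1)) (fun x => antidiagonal (m - x))
    (fun h => by simp only [mem_triples, mem_range, HasAntidiagonal.mem_antidiagonal]; omega)]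
  simp only [Nat.sum_antidiagonal_eq_sum_range_succ_mk]
  have x_zero : ∑ y ∈ range (m - 0 + 1), (X : ℕ[X]) ^ weight 0 y = 1 + C m * X := by
    rw [sum_range_succ']
    simp [weight_zero_left, add_comm]
  have x_pos : ∀ k ∈ range m,
      ∑ y ∈ range (m - (k + 1) + 1), (X : ℕ[X]) ^ weight (k + 1) y = C (m - k) * X ^ 2 := by
    intro k hk
    rw [mem_range] at hk
    simp only [weight_of_one_le _ (Nat.le_add_left 1 k), sum_const, card_range, nsmul_eq_mul]
    rw [show m - (k + 1) + 1 = m - k by omega, ← C_eq_natCast, Nat.cast_id]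
  rw [sum_range_succ', x_zero, sum_congr rfl x_pos, ← sum_mul, ← map_sum,
    sum_range_sub_eq_choose_two, weightPoly]
  ring

section Coefficients

lemma coeff_weightPoly_mul_zero (v : ℕ) (P : ℕ[X]) :
    (weightPoly v * P).coeff 0 = P.coeff 0 := by
  simp [weightPoly, add_mul, mul_assoc]

lemma coeff_weightPoly_mul_one (v : ℕ) (P : ℕ[X]) :
    (weightPoly v * P).coeff 1 = P.coeff 1 + v * P.coeff 0 := by
  simp [weightPoly, add_mul, mul_assoc, coeff_X_pow_mul']

lemma coeff_weightPoly_mul_add_two (v : ℕ) (P : ℕ[X]) (k : ℕ) :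
    (weightPoly v * P).coeff (k + 2) =
      P.coeff (k + 2) + v * P.coeff (k + 1) + (v + 1).choose 2 * P.coeff k := by
  simp [weightPoly, add_mul, mul_assoc]

variable {ι : Type*} [DecidableEq ι] (u : ι → ℕ)

lemma coeff_zero_prod_weightPoly (s : Finset ι) : (∏ i ∈ s, weightPoly (u i)).coeff 0 = 1 := by
  induction s using Finset.induction_on with
  | empty => simp
  | insert a s ha ih => rw [prod_insert ha, coeff_weightPoly_mul_zero, ih]

lemma coeff_one_prod_weightPoly (s : Finset ι) :
    (∏ i ∈ s, weightPoly (u i)).coeff 1 = ∑ i ∈ s, u i := by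
  induction s using Finset.induction_on with
  | empty => simp [coeff_one]
  | insert a s ha ih =>
    rw [prod_insert ha, coeff_weightPoly_mul_one, ih, coeff_zero_prod_weightPoly, sum_insert ha]
    ring

lemma coeff_two_prod_weightPoly (s : Finset ι) :
    (∏ i ∈ s, weightPoly (u i)).coeff 2 = (∑ i ∈ s, u i + 1).choose 2 := by
  induction s using Finset.induction_on with
  | empty => simp [coeff_one]
  | insert a s ha ih =>
    rw [prod_insert ha, coeff_weightPoly_mul_add_two, ih, coeff_one_prod_weightPoly,
      coeff_zero_prod_weightPoly, sum_insert ha, add_add_one_choose_two]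
    ring

lemma coeff_three_prod_weightPoly (s : Finset ι) :
    (∏ i ∈ s, weightPoly (u i)).coeff 3 + ∑ i ∈ s, (u i + 2).choose 3 =
      (∑ i ∈ s, u i + 2).choose 3 := by
  induction s using Finset.induction_on with
  | empty => simp [coeff_one]
  | insert a s ha ih =>
    rw [prod_insert ha, coeff_weightPoly_mul_add_two, coeff_two_prod_weightPoly,
      coeff_one_prod_weightPoly, sum_insert ha, sum_insert ha, add_add_two_choose_three, ← ih]
    ring

end Coefficients

theorem card_filter_sum_weight_le_three {ι : Type*} [Fintype ι] [DecidableEq ι] (u : ι → ℕ) :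
    #{p ∈ Fintype.piFinset (fun i => triples (u i)) | ∑ i, weight (p i).1 (p i).2.1 ≤ 3} =
      (∑ i, u i + 3).choose 3 - ∑ i, (u i + 2).choose 3 := by
  rw [card_filter_le_eq_sum_coeff,
    sum_piFinset_pow_sum _ (fun h : ℕ × ℕ × ℕ => weight h.1 h.2.1)]
  simp only [sum_triples_X_pow_weight, sum_range_succ, sum_range_zero, zero_add,
    coeff_zero_prod_weightPoly, coeff_one_prod_weightPoly, coeff_two_prod_weightPoly]
  have h3 := coeff_three_prod_weightPoly u univ
  have hockey : 1 + ∑ i, u i + (∑ i, u i + 1).choose 2 + (∑ i, u i + 2).choose 3 =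
      (∑ i, u i + 3).choose 3 := by
    simp [Nat.choose_succ_succ']
  omega

end StandardMonomial

theorem stmt0_general (n : ℕ) (u : Fin n → ℕ) :
    Nat.card {t : (Fin n → ℕ) × (Fin n → ℕ) × (Fin n → ℕ) //
      (∀ i, t.1 i + t.2.1 i + t.2.2 i = u i) ∧
      ¬ (∃ i j, i ≠ j ∧ 1 ≤ t.1 i ∧ 1 ≤ t.1 j) ∧
      ¬ (∃ i j k, i ≠ j ∧ i ≠ k ∧ j ≠ k ∧ 1 ≤ t.1 i ∧ 1 ≤ t.2.1 j ∧ 1 ≤ t.2.1 k) ∧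
      ¬ (∃ i j k l, i ≠ j ∧ i ≠ k ∧ i ≠ l ∧ j ≠ k ∧ j ≠ l ∧ k ≠ l ∧
          1 ≤ t.2.1 i ∧ 1 ≤ t.2.1 j ∧ 1 ≤ t.2.1 k ∧ 1 ≤ t.2.1 l)} =
    Nat.choose (∑ i, u i + 3) 3 - ∑ i, Nat.choose (u i + 2) 3 := by
  let zip : (Fin n → ℕ) × (Fin n → ℕ) × (Fin n → ℕ) ≃ (Fin n → ℕ × ℕ × ℕ) :=
    { toFun := fun t i => (t.1 i, t.2.1 i, t.2.2 i)
      invFun := fun p => (fun i => (p i).1, fun i => (p i).2.1, fun i => (p i).2.2)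
      left_inv := fun _ => rfl
      right_inv := fun _ => rfl }
  rw [← StandardMonomial.card_filter_sum_weight_le_three u, ← Nat.subtype_card _ fun _ => Iff.rfl]
  refine Nat.card_congr (zip.subtypeEquiv fun t => ?_)
  simp only [mem_filter, Fintype.mem_piFinset, StandardMonomial.mem_triples,
    StandardMonomial.sum_weight_le_three_iff]
  rfl

/-- The multigraded Hilbert function of `K[x,y,z]/M_n`: the number of monomials
`x^a y^b z^c` of multidegree `u` (i.e. `a i + b i + c i = u i` for each `i`) that are not
divisible by any of the generators `x_i x_j`, `x_i y_j y_k`, `y_i y_j y_k y_l` of `M_n`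
(with distinct indices) equals `C(u_1+⋯+u_n+3,3) - Σ_i C(u_i+2,3)`. -/
theorem stmt0 (n : ℕ) (hn : 2 ≤ n) (u : Fin n → ℕ) :
    Nat.card {t : (Fin n → ℕ) × (Fin n → ℕ) × (Fin n → ℕ) //
      (∀ i, t.1 i + t.2.1 i + t.2.2 i = u i) ∧
      ¬ (∃ i j, i ≠ j ∧ 1 ≤ t.1 i ∧ 1 ≤ t.1 j) ∧
      ¬ (∃ i j k, i ≠ j ∧ i ≠ k ∧ j ≠ k ∧ 1 ≤ t.1 i ∧ 1 ≤ t.2.1 j ∧ 1 ≤ t.2.1 k) ∧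
      ¬ (∃ i j k l, i ≠ j ∧ i ≠ k ∧ i ≠ l ∧ j ≠ k ∧ j ≠ l ∧ k ≠ l ∧
          1 ≤ t.2.1 i ∧ 1 ≤ t.2.1 j ∧ 1 ≤ t.2.1 k ∧ 1 ≤ t.2.1 l)} =
    Nat.choose (∑ i, u i + 3) 3 - ∑ i, Nat.choose (u i + 2) 3 :=
  stmt0_general n u
end

section
/- Let n ≥ 2. The squarefree monomial ideal M_n = ⟨x_i x_j, x_i y_j y_k, y_i y_j y_k y_l : i,j,k,l ∈ [n] distinct⟩ in K[x_1,y_1,z_1,...,x_n,y_n,z_n] equals the intersection of the C(n,3) + 2·C(n,2) prime monomial ideals P_{ijk} and Q_{ij}, where P_{ijk} is generated by x_1,...,x_n together with all y_l for l ∉ {i,j,k}, and Q_{ij} is generated by all x_l with l ≠ i together with all y_l with l ∉ {i,j}. -/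
open MvPolynomial

noncomputable section

variable (K : Type*) [Field K] (n : ℕ)

/-- The variable `x_i`. -/
def Xv (i : Fin n) : MvPolynomial (Fin n × Fin 3) K := MvPolynomial.X (i, 0)
/-- The variable `y_i`. -/
def Yv (i : Fin n) : MvPolynomial (Fin n × Fin 3) K := MvPolynomial.X (i, 1)

/-- The ideal `M_n = ⟨x_i x_j, x_i y_j y_k, y_i y_j y_k y_l : distinct indices⟩`. -/
def Mideal : Ideal (MvPolynomial (Fin n × Fin 3) K) :=
  Ideal.span ({p | ∃ i j : Fin n, i ≠ j ∧ p = Xv K n i * Xv K n j} ∪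
    {p | ∃ i j k : Fin n, i ≠ j ∧ i ≠ k ∧ j ≠ k ∧ p = Xv K n i * Yv K n j * Yv K n k} ∪
    {p | ∃ i j k l : Fin n, i ≠ j ∧ i ≠ k ∧ i ≠ l ∧ j ≠ k ∧ j ≠ l ∧ k ≠ l ∧
      p = Yv K n i * Yv K n j * Yv K n k * Yv K n l})

/-- The prime `P_{ijk} = ⟨x₁,…,x_n⟩ + ⟨y_l : l ∉ {i,j,k}⟩`. -/
def Pideal (i j k : Fin n) : Ideal (MvPolynomial (Fin n × Fin 3) K) :=
  Ideal.span ({p | ∃ l : Fin n, p = Xv K n l} ∪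
    {p | ∃ l : Fin n, l ≠ i ∧ l ≠ j ∧ l ≠ k ∧ p = Yv K n l})

/-- The prime `Q_{ij} = ⟨x_l : l ≠ i⟩ + ⟨y_l : l ∉ {i,j}⟩`. -/
def Qideal (i j : Fin n) : Ideal (MvPolynomial (Fin n × Fin 3) K) :=
  Ideal.span ({p | ∃ l : Fin n, l ≠ i ∧ p = Xv K n l} ∪
    {p | ∃ l : Fin n, l ≠ i ∧ l ≠ j ∧ p = Yv K n l})

/-! ### Auxiliary lemmas -/

section Aux

/-- Primality of an ideal generated by a set of variables. -/
lemma span_X_image_isPrime {σ : Type*} (s : Set σ) :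
    (Ideal.span (MvPolynomial.X '' s : Set (MvPolynomial σ K))).IsPrime := by
  classical
  set I : Ideal (MvPolynomial σ K) := Ideal.span (MvPolynomial.X '' s) with hI
  let ψ : MvPolynomial σ K →ₐ[K] MvPolynomial σ K :=
    aeval (fun i => if i ∈ s then 0 else X i)
  have hsub : ∀ f : MvPolynomial σ K, f - ψ f ∈ I := by
    intro f
    induction f using MvPolynomial.induction_on with
    | C a => simp [ψ]
    | add p q hp hq =>
        have h := Ideal.add_mem _ hp hq
        have : p + q - ψ (p + q) = (p - ψ p) + (q - ψ q) := by
          rw [map_add]; ring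
        rwa [this]
    | mul_X p i hp =>
        by_cases hi : i ∈ s
        · have hX : X i ∈ I := Ideal.subset_span ⟨i, hi, rfl⟩
          have : p * X i - ψ (p * X i) = p * X i := by
            simp [ψ, map_mul, aeval_X, hi]
          rw [this]
          exact Ideal.mul_mem_left _ p hX
        · have : p * X i - ψ (p * X i) = (p - ψ p) * X i := by
            simp only [ψ, map_mul, aeval_X, if_neg hi]; ring
          rw [this]
          exact Ideal.mul_mem_right _ _ hp
  have hker : I = RingHom.ker (ψ : MvPolynomial σ K →+* MvPolynomial σ K) := by
    apply le_antisymm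
    · rw [hI, Ideal.span_le]
      rintro p ⟨i, hi, rfl⟩
      simp [RingHom.mem_ker, ψ, aeval_X, hi]
    · intro f hf
      have h0 : (ψ : MvPolynomial σ K →+* MvPolynomial σ K) f = 0 := hf
      have := hsub f
      rwa [show ψ f = 0 from h0, sub_zero] at this
  rw [hker]
  exact RingHom.ker_isPrime _

variable {n}

lemma ne02 : ((0 : Fin 3)) ≠ (1 : Fin 3) := by decide

/-- pair inequality from first coordinates -/
lemma pne {i j : Fin n} {a b : Fin 3} (h : i ≠ j) : ((i, a) : Fin n × Fin 3) ≠ (j, b) := by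
  intro hc; exact h (congrArg Prod.fst hc)

lemma pne' (i j : Fin n) : ((i, (0 : Fin 3)) : Fin n × Fin 3) ≠ (j, (1 : Fin 3)) := by
  intro hc; exact (by decide : ((0 : Fin 3)) ≠ 1) (congrArg Prod.snd hc)

lemma sum_single_le₂ {α : Type*} [DecidableEq α] {a b : α} {m : α →₀ ℕ} (hab : a ≠ b)
    (ha : m a ≠ 0) (hb : m b ≠ 0) : Finsupp.single a 1 + Finsupp.single b 1 ≤ m := by
  rw [Finsupp.le_def]
  intro v
  simp only [Finsupp.add_apply, Finsupp.single_apply]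
  rcases eq_or_ne a v with h1 | h1
  · subst h1
    rw [if_pos rfl, if_neg (Ne.symm hab)]
    omega
  rcases eq_or_ne b v with h2 | h2
  · subst h2
    rw [if_pos rfl, if_neg hab]
    omega
  simp [h1, h2]

lemma sum_single_le₃ {α : Type*} [DecidableEq α] {a b c : α} {m : α →₀ ℕ}
    (hab : a ≠ b) (hac : a ≠ c) (hbc : b ≠ c)
    (ha : m a ≠ 0) (hb : m b ≠ 0) (hc : m c ≠ 0) :
    Finsupp.single a 1 + Finsupp.single b 1 + Finsupp.single c 1 ≤ m := by
  rw [Finsupp.le_def]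
  intro v
  simp only [Finsupp.add_apply, Finsupp.single_apply]
  rcases eq_or_ne a v with h1 | h1
  · subst h1
    rw [if_pos rfl, if_neg (Ne.symm hab), if_neg (Ne.symm hac)]
    omega
  rcases eq_or_ne b v with h2 | h2
  · subst h2
    rw [if_pos rfl, if_neg hab, if_neg (Ne.symm hbc)]
    omega
  rcases eq_or_ne c v with h3 | h3
  · subst h3
    rw [if_pos rfl, if_neg hac, if_neg hbc]
    omega
  simp [h1, h2, h3]

lemma sum_single_le₄ {α : Type*} [DecidableEq α] {a b c d : α} {m : α →₀ ℕ}
    (hab : a ≠ b) (hac : a ≠ c) (had : a ≠ d) (hbc : b ≠ c) (hbd : b ≠ d) (hcd : c ≠ d)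
    (ha : m a ≠ 0) (hb : m b ≠ 0) (hc : m c ≠ 0) (hd : m d ≠ 0) :
    Finsupp.single a 1 + Finsupp.single b 1 + Finsupp.single c 1 + Finsupp.single d 1 ≤ m := by
  rw [Finsupp.le_def]
  intro v
  simp only [Finsupp.add_apply, Finsupp.single_apply]
  rcases eq_or_ne a v with h1 | h1
  · subst h1
    rw [if_pos rfl, if_neg (Ne.symm hab), if_neg (Ne.symm hac), if_neg (Ne.symm had)]
    omega
  rcases eq_or_ne b v with h2 | h2
  · subst h2
    rw [if_pos rfl, if_neg hab, if_neg (Ne.symm hbc), if_neg (Ne.symm hbd)]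
    omega
  rcases eq_or_ne c v with h3 | h3
  · subst h3
    rw [if_pos rfl, if_neg hac, if_neg hbc, if_neg (Ne.symm hcd)]
    omega
  rcases eq_or_ne d v with h4 | h4
  · subst h4
    rw [if_pos rfl, if_neg had, if_neg hbd, if_neg hcd]
    omega
  simp [h1, h2, h3, h4]

/-- Among four distinct elements of `Fin n` one avoids three given ones. -/
lemma avoid3 {i j k l a b c : Fin n} (hij : i ≠ j) (hik : i ≠ k) (hil : i ≠ l)
    (hjk : j ≠ k) (hjl : j ≠ l) (hkl : k ≠ l) :
    ∃ t : Fin n, (t = i ∨ t = j ∨ t = k ∨ t = l) ∧ t ≠ a ∧ t ≠ b ∧ t ≠ c := by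
  by_contra h
  push_neg at h
  have hi := h i (Or.inl rfl)
  have hj := h j (Or.inr (Or.inl rfl))
  have hk := h k (Or.inr (Or.inr (Or.inl rfl)))
  have hl := h l (Or.inr (Or.inr (Or.inr rfl)))
  simp only [Fin.ext_iff, not_and, not_not, ← Fin.val_ne_iff] at *
  omega

/-- Among four distinct elements of `Fin n` one avoids two given ones. -/
lemma avoid2 {i j k l a b : Fin n} (hij : i ≠ j) (hik : i ≠ k) (hil : i ≠ l)
    (hjk : j ≠ k) (hjl : j ≠ l) (hkl : k ≠ l) :
    ∃ t : Fin n, (t = i ∨ t = j ∨ t = k ∨ t = l) ∧ t ≠ a ∧ t ≠ b := by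
  obtain ⟨t, ht, ha, hb, _⟩ := avoid3 (a := a) (b := b) (c := b) hij hik hil hjk hjl hkl
  exact ⟨t, ht, ha, hb⟩

end Aux

/-! ### Monomial generator description of `Mideal` -/

/-- The exponent vectors of the generators of `M_n`. -/
def Gset : Set ((Fin n × Fin 3) →₀ ℕ) :=
  {g | ∃ i j : Fin n, i ≠ j ∧
      g = Finsupp.single (i, (0 : Fin 3)) 1 + Finsupp.single (j, 0) 1} ∪
  {g | ∃ i j k : Fin n, i ≠ j ∧ i ≠ k ∧ j ≠ k ∧
      g = Finsupp.single (i, (0 : Fin 3)) 1 + Finsupp.single (j, 1) 1 +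
        Finsupp.single (k, 1) 1} ∪
  {g | ∃ i j k l : Fin n, i ≠ j ∧ i ≠ k ∧ i ≠ l ∧ j ≠ k ∧ j ≠ l ∧ k ≠ l ∧
      g = Finsupp.single (i, (1 : Fin 3)) 1 + Finsupp.single (j, 1) 1 +
        Finsupp.single (k, 1) 1 + Finsupp.single (l, 1) 1}

lemma Xm {σ : Type*} (a : σ) :
    (MvPolynomial.X a : MvPolynomial σ K) = monomial (Finsupp.single a 1) 1 := rfl

lemma Mideal_eq_span :
    Mideal K n = Ideal.span ((fun s => monomial s (1 : K)) '' Gset n) := by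
  unfold Mideal Gset
  congr 1
  rw [Set.image_union, Set.image_union]
  congr 1
  · congr 1
    · ext p
      constructor
      · rintro ⟨i, j, hij, rfl⟩
        exact ⟨_, ⟨i, j, hij, rfl⟩, by simp [Xv, Xm, monomial_mul]⟩
      · rintro ⟨g, ⟨i, j, hij, rfl⟩, rfl⟩
        exact ⟨i, j, hij, by simp [Xv, Xm, monomial_mul]⟩
    · ext p
      constructor
      · rintro ⟨i, j, k, h1, h2, h3, rfl⟩
        exact ⟨_, ⟨i, j, k, h1, h2, h3, rfl⟩, by simp [Xv, Yv, Xm, monomial_mul]⟩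
      · rintro ⟨g, ⟨i, j, k, h1, h2, h3, rfl⟩, rfl⟩
        exact ⟨i, j, k, h1, h2, h3, by simp [Xv, Yv, Xm, monomial_mul]⟩
  · ext p
    constructor
    · rintro ⟨i, j, k, l, h1, h2, h3, h4, h5, h6, rfl⟩
      exact ⟨_, ⟨i, j, k, l, h1, h2, h3, h4, h5, h6, rfl⟩, by simp [Yv, Xm, monomial_mul]⟩
    · rintro ⟨g, ⟨i, j, k, l, h1, h2, h3, h4, h5, h6, rfl⟩, rfl⟩
      exact ⟨i, j, k, l, h1, h2, h3, h4, h5, h6, by simp [Yv, Xm, monomial_mul]⟩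

lemma mem_Mideal_iff {f : MvPolynomial (Fin n × Fin 3) K} :
    f ∈ Mideal K n ↔ ∀ m ∈ f.support, ∃ g ∈ Gset n, g ≤ m := by
  rw [Mideal_eq_span, mem_ideal_span_monomial_image]

/-! ### Variable-set descriptions of the primes -/

lemma Pideal_eq_span (i j k : Fin n) :
    Pideal K n i j k = Ideal.span (MvPolynomial.X ''
      {v : Fin n × Fin 3 | v.2 = 0 ∨ (v.2 = 1 ∧ v.1 ≠ i ∧ v.1 ≠ j ∧ v.1 ≠ k)}) := by
  unfold Pideal
  congr 1
  ext p
  constructor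
  · rintro (⟨l, rfl⟩ | ⟨l, h1, h2, h3, rfl⟩)
    · exact ⟨(l, 0), Or.inl rfl, rfl⟩
    · exact ⟨(l, 1), Or.inr ⟨rfl, h1, h2, h3⟩, rfl⟩
  · rintro ⟨v, (h0 | ⟨h1, ha, hb, hc⟩), rfl⟩
    · exact Or.inl ⟨v.1, by rw [show v = (v.1, (0 : Fin 3)) from by rw [← h0]]; rfl⟩
    · exact Or.inr ⟨v.1, ha, hb, hc,
        by rw [show v = (v.1, (1 : Fin 3)) from by rw [← h1]]; rfl⟩

lemma Qideal_eq_span (i j : Fin n) :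
    Qideal K n i j = Ideal.span (MvPolynomial.X ''
      {v : Fin n × Fin 3 | (v.2 = 0 ∧ v.1 ≠ i) ∨ (v.2 = 1 ∧ v.1 ≠ i ∧ v.1 ≠ j)}) := by
  unfold Qideal
  congr 1
  ext p
  constructor
  · rintro (⟨l, h1, rfl⟩ | ⟨l, h1, h2, rfl⟩)
    · exact ⟨(l, 0), Or.inl ⟨rfl, h1⟩, rfl⟩
    · exact ⟨(l, 1), Or.inr ⟨rfl, h1, h2⟩, rfl⟩
  · rintro ⟨v, (⟨h0, ha⟩ | ⟨h1, ha, hb⟩), rfl⟩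
    · exact Or.inl ⟨v.1, ha, by rw [show v = (v.1, (0 : Fin 3)) from by rw [← h0]]; rfl⟩
    · exact Or.inr ⟨v.1, ha, hb,
        by rw [show v = (v.1, (1 : Fin 3)) from by rw [← h1]]; rfl⟩

lemma mem_Pideal_iff {i j k : Fin n} {f : MvPolynomial (Fin n × Fin 3) K} :
    f ∈ Pideal K n i j k ↔ ∀ m ∈ f.support,
      (∃ l, m (l, 0) ≠ 0) ∨ (∃ l, l ≠ i ∧ l ≠ j ∧ l ≠ k ∧ m (l, 1) ≠ 0) := by
  rw [Pideal_eq_span, mem_ideal_span_X_image]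
  refine forall₂_congr fun m _ => ⟨?_, ?_⟩
  · rintro ⟨v, (h0 | ⟨h1, ha, hb, hc⟩), hm⟩
    · exact Or.inl ⟨v.1, by rwa [show ((v.1, (0 : Fin 3)) : Fin n × Fin 3) = v from by rw [← h0]]⟩
    · exact Or.inr ⟨v.1, ha, hb, hc, by rwa [show ((v.1, (1 : Fin 3)) : Fin n × Fin 3) = v from by rw [← h1]]⟩
  · rintro (⟨l, hl⟩ | ⟨l, ha, hb, hc, hl⟩)
    · exact ⟨(l, 0), Or.inl rfl, hl⟩
    · exact ⟨(l, 1), Or.inr ⟨rfl, ha, hb, hc⟩, hl⟩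

lemma mem_Qideal_iff {i j : Fin n} {f : MvPolynomial (Fin n × Fin 3) K} :
    f ∈ Qideal K n i j ↔ ∀ m ∈ f.support,
      (∃ l, l ≠ i ∧ m (l, 0) ≠ 0) ∨ (∃ l, l ≠ i ∧ l ≠ j ∧ m (l, 1) ≠ 0) := by
  rw [Qideal_eq_span, mem_ideal_span_X_image]
  refine forall₂_congr fun m _ => ⟨?_, ?_⟩
  · rintro ⟨v, (⟨h0, ha⟩ | ⟨h1, ha, hb⟩), hm⟩
    · exact Or.inl ⟨v.1, ha, by rwa [show ((v.1, (0 : Fin 3)) : Fin n × Fin 3) = v from by rw [← h0]]⟩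
    · exact Or.inr ⟨v.1, ha, hb, by rwa [show ((v.1, (1 : Fin 3)) : Fin n × Fin 3) = v from by rw [← h1]]⟩
  · rintro (⟨l, ha, hl⟩ | ⟨l, ha, hb, hl⟩)
    · exact ⟨(l, 0), Or.inl ⟨rfl, ha⟩, hl⟩
    · exact ⟨(l, 1), Or.inr ⟨rfl, ha, hb⟩, hl⟩

/-! ### The combinatorial key lemma -/

lemma key {n : ℕ} (hn : 2 ≤ n) (m : (Fin n × Fin 3) →₀ ℕ)
    (hQ : ∀ i j : Fin n, i ≠ j →
      (∃ l, l ≠ i ∧ m (l, 0) ≠ 0) ∨ (∃ l, l ≠ i ∧ l ≠ j ∧ m (l, 1) ≠ 0))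
    (hP : ∀ i j k : Fin n, i ≠ j → i ≠ k → j ≠ k →
      (∃ l, m (l, 0) ≠ 0) ∨ (∃ l, l ≠ i ∧ l ≠ j ∧ l ≠ k ∧ m (l, 1) ≠ 0)) :
    (∃ i j, i ≠ j ∧ m (i, 0) ≠ 0 ∧ m (j, 0) ≠ 0) ∨
    (∃ i j k, i ≠ j ∧ i ≠ k ∧ j ≠ k ∧ m (i, 0) ≠ 0 ∧ m (j, 1) ≠ 0 ∧ m (k, 1) ≠ 0) ∨
    (∃ i j k l, i ≠ j ∧ i ≠ k ∧ i ≠ l ∧ j ≠ k ∧ j ≠ l ∧ k ≠ l ∧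
      m (i, 1) ≠ 0 ∧ m (j, 1) ≠ 0 ∧ m (k, 1) ≠ 0 ∧ m (l, 1) ≠ 0) := by
  have hnt : Nontrivial (Fin n) :=
    ⟨⟨0, by omega⟩, ⟨1, by omega⟩, by simp [Fin.ext_iff]⟩
  by_cases h1 : ∃ i j : Fin n, i ≠ j ∧ m (i, 0) ≠ 0 ∧ m (j, 0) ≠ 0
  · exact Or.inl h1
  by_cases h2 : ∃ a : Fin n, m (a, 0) ≠ 0
  · obtain ⟨a, ha⟩ := h2
    have hA : ∀ l, l ≠ a → m (l, 0) = 0 := by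
      intro l hl
      by_contra hc
      exact h1 ⟨a, l, Ne.symm hl, ha, hc⟩
    obtain ⟨w, hw⟩ := exists_ne a
    rcases hQ a w (Ne.symm hw) with ⟨l, hla, hl⟩ | ⟨b1, hb1a, _, hb1⟩
    · exact absurd (hA l hla) hl
    · rcases hQ a b1 (Ne.symm hb1a) with ⟨l, hla, hl⟩ | ⟨b2, hb2a, hb2b1, hb2⟩
      · exact absurd (hA l hla) hl
      · exact Or.inr (Or.inl ⟨a, b1, b2, Ne.symm hb1a, Ne.symm hb2a, Ne.symm hb2b1,
          ha, hb1, hb2⟩)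
  · push_neg at h2
    have hQ' : ∀ i j : Fin n, i ≠ j → ∃ l, l ≠ i ∧ l ≠ j ∧ m (l, 1) ≠ 0 := by
      intro i j hij
      rcases hQ i j hij with ⟨l, _, hl⟩ | h
      · exact absurd (h2 l) hl
      · exact h
    obtain ⟨u, v, huv⟩ := exists_pair_ne (Fin n)
    obtain ⟨b1, _, _, hb1⟩ := hQ' u v huv
    obtain ⟨w, hw⟩ := exists_ne b1
    obtain ⟨b2, hb2b1, _, hb2⟩ := hQ' b1 w (Ne.symm hw)
    obtain ⟨b3, hb3b1, hb3b2, hb3⟩ := hQ' b1 b2 (Ne.symm hb2b1)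
    rcases hP b1 b2 b3 (Ne.symm hb2b1) (Ne.symm hb3b1) (Ne.symm hb3b2) with
      ⟨l, hl⟩ | ⟨b4, hb4b1, hb4b2, hb4b3, hb4⟩
    · exact absurd (h2 l) hl
    · exact Or.inr (Or.inr ⟨b1, b2, b3, b4, Ne.symm hb2b1, Ne.symm hb3b1, Ne.symm hb4b1,
        Ne.symm hb3b2, Ne.symm hb4b2, Ne.symm hb4b3, hb1, hb2, hb3, hb4⟩)

/-! ### Main theorem -/

/-- `M_n` is the intersection of the prime monomial ideals `P_{ijk}` and `Q_{ij}`,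
each of which is prime. -/
theorem stmt1 (hn : 2 ≤ n) :
    (Mideal K n =
      (⨅ (i : Fin n) (j : Fin n) (k : Fin n) (_ : i ≠ j) (_ : i ≠ k) (_ : j ≠ k),
        Pideal K n i j k) ⊓
      (⨅ (i : Fin n) (j : Fin n) (_ : i ≠ j), Qideal K n i j)) ∧
    (∀ i j k : Fin n, i ≠ j → i ≠ k → j ≠ k → (Pideal K n i j k).IsPrime) ∧
    (∀ i j : Fin n, i ≠ j → (Qideal K n i j).IsPrime) := by
  refine ⟨?_, ?_, ?_⟩
  · apply le_antisymm
    · -- M ⊆ each prime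
      rw [le_inf_iff]
      constructor
      · simp only [le_iInf_iff]
        intro i j k hij hik hjk
        unfold Mideal
        rw [Ideal.span_le]
        rintro p ((⟨a, b, hab, rfl⟩ | ⟨a, b, c, h1, h2, h3, rfl⟩) |
          ⟨a, b, c, d, h1, h2, h3, h4, h5, h6, rfl⟩)
        · exact Ideal.mul_mem_right _ _ (Ideal.subset_span (Or.inl ⟨a, rfl⟩))
        · exact Ideal.mul_mem_right _ _ (Ideal.mul_mem_right _ _
            (Ideal.subset_span (Or.inl ⟨a, rfl⟩)))
        · obtain ⟨t, ht, h1', h2', h3'⟩ := avoid3 h1 h2 h3 h4 h5 h6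
          have hmem : Yv K n t ∈ Pideal K n i j k :=
            Ideal.subset_span (Or.inr ⟨t, h1', h2', h3', rfl⟩)
          rcases ht with rfl | rfl | rfl | rfl
          · exact Ideal.mul_mem_right _ _ (Ideal.mul_mem_right _ _
              (Ideal.mul_mem_right _ _ hmem))
          · exact Ideal.mul_mem_right _ _ (Ideal.mul_mem_right _ _
              (Ideal.mul_mem_left _ _ hmem))
          · exact Ideal.mul_mem_right _ _ (Ideal.mul_mem_left _ _ hmem)
          · exact Ideal.mul_mem_left _ _ hmem
      · simp only [le_iInf_iff]
        intro i j hij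
        unfold Mideal
        rw [Ideal.span_le]
        rintro p ((⟨a, b, hab, rfl⟩ | ⟨a, b, c, h1, h2, h3, rfl⟩) |
          ⟨a, b, c, d, h1, h2, h3, h4, h5, h6, rfl⟩)
        · rcases eq_or_ne a i with rfl | hai
          · exact Ideal.mul_mem_left _ _
              (Ideal.subset_span (Or.inl ⟨b, Ne.symm hab, rfl⟩))
          · exact Ideal.mul_mem_right _ _
              (Ideal.subset_span (Or.inl ⟨a, hai, rfl⟩))
        · rcases eq_or_ne a i with rfl | hai
          · rcases eq_or_ne b j with rfl | hbj
            · exact Ideal.mul_mem_left _ _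
                (Ideal.subset_span (Or.inr ⟨c, Ne.symm h2, Ne.symm h3, rfl⟩))
            · exact Ideal.mul_mem_right _ _ (Ideal.mul_mem_left _ _
                (Ideal.subset_span (Or.inr ⟨b, Ne.symm h1, hbj, rfl⟩)))
          · exact Ideal.mul_mem_right _ _ (Ideal.mul_mem_right _ _
              (Ideal.subset_span (Or.inl ⟨a, hai, rfl⟩)))
        · obtain ⟨t, ht, h1', h2'⟩ := avoid2 h1 h2 h3 h4 h5 h6
          have hmem : Yv K n t ∈ Qideal K n i j :=
            Ideal.subset_span (Or.inr ⟨t, h1', h2', rfl⟩)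
          rcases ht with rfl | rfl | rfl | rfl
          · exact Ideal.mul_mem_right _ _ (Ideal.mul_mem_right _ _
              (Ideal.mul_mem_right _ _ hmem))
          · exact Ideal.mul_mem_right _ _ (Ideal.mul_mem_right _ _
              (Ideal.mul_mem_left _ _ hmem))
          · exact Ideal.mul_mem_right _ _ (Ideal.mul_mem_left _ _ hmem)
          · exact Ideal.mul_mem_left _ _ hmem
    · -- intersection ⊆ M
      intro f hf
      rw [Submodule.mem_inf] at hf
      obtain ⟨hfP, hfQ⟩ := hf
      simp only [Ideal.mem_iInf] at hfP hfQ
      rw [mem_Mideal_iff]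
      intro m hm
      have hPm : ∀ i j k : Fin n, i ≠ j → i ≠ k → j ≠ k →
          (∃ l, m (l, 0) ≠ 0) ∨ (∃ l, l ≠ i ∧ l ≠ j ∧ l ≠ k ∧ m (l, 1) ≠ 0) :=
        fun i j k h1 h2 h3 => (mem_Pideal_iff K n).mp (hfP i j k h1 h2 h3) m hm
      have hQm : ∀ i j : Fin n, i ≠ j →
          (∃ l, l ≠ i ∧ m (l, 0) ≠ 0) ∨ (∃ l, l ≠ i ∧ l ≠ j ∧ m (l, 1) ≠ 0) :=
        fun i j h => (mem_Qideal_iff K n).mp (hfQ i j h) m hm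
      rcases key hn m hQm hPm with
        ⟨i, j, hij, hi, hj⟩ |
        ⟨i, j, k, hij, hik, hjk, hi, hj, hk⟩ |
        ⟨i, j, k, l, hij, hik, hil, hjk, hjl, hkl, hi, hj, hk, hl⟩
      · exact ⟨_, Or.inl (Or.inl ⟨i, j, hij, rfl⟩), sum_single_le₂ (pne hij) hi hj⟩
      · exact ⟨_, Or.inl (Or.inr ⟨i, j, k, hij, hik, hjk, rfl⟩),
          sum_single_le₃ (pne' i j) (pne' i k) (pne hjk) hi hj hk⟩
      · exact ⟨_, Or.inr ⟨i, j, k, l, hij, hik, hil, hjk, hjl, hkl, rfl⟩,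
          sum_single_le₄ (pne hij) (pne hik) (pne hil) (pne hjk) (pne hjl) (pne hkl)
            hi hj hk hl⟩
  · intro i j k _ _ _
    rw [Pideal_eq_span]
    exact span_X_image_isPrime K _
  · intro i j _
    rw [Qideal_eq_span]
    exact span_X_image_isPrime K _

end
end

section
/- Let n ≥ 2 and u ∈ ℕ^n. The number of monomials of multidegree u in K[x_1,y_1,z_1,...,x_n,y_n,z_n] not lying in the monomial ideal N_n = ⟨x_i y_k : i < k⟩ + ⟨x_i z_j x_k, y_i z_j y_k, y_i z_j x_k : i < j < k⟩ equals C(u_1+...+u_n+3, 3) - Σ_{i=1}^n C(u_i+2, 3). -/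
/-!
A triple `(w, b, a)` with `w + b + a ≤ U = u₁ + ⋯ + uₙ` stands for the word
`z^w y^b x^a z^(U - w - b - a)`. Cutting it into consecutive blocks of lengths `u₁, …, uₙ` and
reading block `i` as the exponents of `x_i, y_i, z_i` gives a standard monomial: in the word no `x`
precedes a `y`, and no `z` lies between two letters `x`, `y`. Conversely, in a standard monomial
the `y`s come before the `x`s with no `z` in between, so it comes from the word where `b` and `a`
are its total `y`- and `x`-degrees and `w` is the number of `z`s before its first `x` or `y`.
Two words give the same monomial only when their segment `y^b x^a` lies inside one block; keeping
one word per monomial leaves `C(U + 3, 3)` triples minus `C(u_i + 2, 3)` for each block `i`.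
-/

namespace StandardMonomials

open Finset

variable {n : ℕ}

def partialSum (f : Fin n → ℕ) (i : ℕ) : ℕ :=
  ∑ j ∈ univ.filter (fun j : Fin n ↦ (j : ℕ) < i), f j

section partialSum

variable (f g : Fin n → ℕ)

@[simp] lemma partialSum_zero : partialSum f 0 = 0 := by simp [partialSum]

lemma partialSum_of_le {i : ℕ} (hi : n ≤ i) : partialSum f i = ∑ j, f j := by
  rw [partialSum, filter_true_of_mem fun j _ ↦ by omega]

lemma partialSum_succ (i : Fin n) : partialSum f (i + 1) = partialSum f i + f i := by
  have : univ.filter (fun j : Fin n ↦ (j : ℕ) < i + 1) =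
      insert i (univ.filter fun j : Fin n ↦ (j : ℕ) < i) := by
    ext j
    simp only [mem_filter, mem_univ, true_and, mem_insert, Fin.ext_iff]
    omega
  rw [partialSum, this, sum_insert (by simp), partialSum, add_comm]

lemma partialSum_mono : Monotone (partialSum f) := fun _ _ hij ↦
  sum_le_sum_of_subset (monotone_filter_right _ fun _ hj ↦ by omega)

lemma partialSum_le_sum (i : ℕ) : partialSum f i ≤ ∑ j, f j :=
  sum_le_sum_of_subset (filter_subset _ _)

lemma partialSum_eq_sum_of_forall {i : ℕ} (h : ∀ j : Fin n, i ≤ j → f j = 0) :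
    partialSum f i = ∑ j, f j :=
  sum_subset (filter_subset _ _) fun j _ hj ↦ h j (by simpa using hj)

lemma partialSum_eq_zero_iff {i : ℕ} :
    partialSum f i = 0 ↔ ∀ j : Fin n, (j : ℕ) < i → f j = 0 := by
  simp [partialSum]

lemma partialSum_add (i : ℕ) : partialSum (f + g) i = partialSum f i + partialSum g i :=
  sum_add_distrib

lemma partialSum_injective : Function.Injective (partialSum (n := n)) := by
  intro f g h
  funext i
  have := congrFun h (i + 1)
  rw [partialSum_succ, partialSum_succ, congrFun h i] at this
  omega

lemma exists_partialSum_le_lt {w : ℕ} (hw : w < ∑ i, f i) :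
    ∃ m : Fin n, partialSum f m ≤ w ∧ w < partialSum f (m + 1) := by
  have hex : ∃ i, w < partialSum f i := ⟨n, by rwa [partialSum_of_le f le_rfl]⟩
  have h₀ : Nat.find hex ≠ 0 := fun h ↦ by simpa [h] using Nat.find_spec hex
  have hn : Nat.find hex ≤ n := Nat.find_min' hex (by rwa [partialSum_of_le f le_rfl])
  refine ⟨⟨Nat.find hex - 1, by omega⟩,
    not_lt.1 (Nat.find_min hex (Nat.sub_one_lt h₀)), ?_⟩
  simpa [Nat.sub_add_cancel (Nat.pos_of_ne_zero h₀)] using Nat.find_spec hex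

end partialSum

def window (a b : ℕ) : Finset (ℕ × ℕ × ℕ) :=
  (Ico a b ×ˢ range b ×ˢ range b).filter fun s ↦ s.1 + s.2.1 + s.2.2 < b

lemma mem_window {a b : ℕ} {s : ℕ × ℕ × ℕ} :
    s ∈ window a b ↔ a ≤ s.1 ∧ s.1 + s.2.1 + s.2.2 < b := by
  simp only [window, mem_filter, mem_product, mem_Ico, mem_range]
  omega

def windowEquiv (a k : ℕ) : window a (a + k + 1) ≃ {P : Fin 4 → ℕ // ∑ i, P i = k} where
  toFun s := ⟨![s.1.1 - a, s.1.2.1, s.1.2.2, a + k - (s.1.1 + s.1.2.1 + s.1.2.2)], by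
    have := mem_window.1 s.2
    rw [Fin.sum_univ_four]
    dsimp only [Matrix.cons_val]
    omega⟩
  invFun P := ⟨(P.1 0 + a, P.1 1, P.1 2), by
    have := P.2
    rw [Fin.sum_univ_four] at this
    rw [mem_window]
    dsimp only
    omega⟩
  left_inv s := Subtype.ext <| Prod.ext (Nat.sub_add_cancel (mem_window.1 s.2).1) rfl
  right_inv P := by
    have := P.2
    rw [Fin.sum_univ_four] at this
    ext i
    fin_cases i
    · exact Nat.add_sub_cancel _ _
    · rfl
    · rfl
    · show a + k - (P.1 0 + a + P.1 1 + P.1 2) = P.1 3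
      omega

lemma card_window (a b : ℕ) : #(window a b) = (b - a + 2).choose 3 := by
  rcases Nat.lt_or_ge a b with h | h
  · obtain ⟨k, rfl⟩ : ∃ k, b = a + k + 1 := ⟨b - a - 1, by omega⟩
    rw [card_eq_of_equiv_fintype ((windowEquiv a k).trans (Sym.equivNatSumOfFintype _ _).symm),
      Sym.card_sym_eq_choose, Fintype.card_fin, show a + k + 1 - a + 2 = k + 3 by omega,
      show 4 + k - 1 = k + 3 by omega, Nat.choose_symm_add]
  · rw [card_eq_zero.2 (eq_empty_of_forall_notMem fun s hs ↦ by rw [mem_window] at hs; omega),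
      Nat.sub_eq_zero_of_le h]
    rfl

/-- A word whose segment `y^b x^a` lies in block `m` without reaching its end gives the same
monomial as the word with that segment pushed to the end of the block; these are removed. -/
def goodWords (u : Fin n → ℕ) : Finset (ℕ × ℕ × ℕ) :=
  window 0 (∑ i, u i + 1) \
    univ.biUnion fun m : Fin n ↦ window (partialSum u m) (partialSum u (m + 1))

lemma mem_goodWords {u : Fin n → ℕ} {s : ℕ × ℕ × ℕ} :
    s ∈ goodWords u ↔ s.1 + s.2.1 + s.2.2 ≤ ∑ i, u i ∧
      ∀ m : Fin n,
        ¬ (partialSum u m ≤ s.1 ∧ s.1 + s.2.1 + s.2.2 < partialSum u (m + 1)) := by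
  simp only [goodWords, mem_sdiff, mem_window, mem_biUnion, mem_univ, true_and, not_exists,
    Nat.lt_succ_iff, zero_le]

lemma card_goodWords (u : Fin n → ℕ) :
    #(goodWords u) = (∑ i, u i + 3).choose 3 - ∑ i, (u i + 2).choose 3 := by
  have hsub : univ.biUnion (fun m : Fin n ↦ window (partialSum u m) (partialSum u (m + 1))) ⊆
      window 0 (∑ i, u i + 1) := by
    intro s hs
    obtain ⟨m, -, hm⟩ := mem_biUnion.1 hs
    have := partialSum_le_sum u (m + 1)
    rw [mem_window] at hm ⊢
    omega
  have hdisj : ((univ : Finset (Fin n)) : Set (Fin n)).PairwiseDisjoint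
      fun m ↦ window (partialSum u m) (partialSum u (m + 1)) := by
    intro m _ m' _ hmm'
    refine disjoint_left.2 fun s hs hs' ↦ ?_
    rw [mem_window] at hs hs'
    rcases lt_or_gt_of_ne hmm' with h | h
    · have := partialSum_mono u (show (m : ℕ) + 1 ≤ m' by omega); omega
    · have := partialSum_mono u (show (m' : ℕ) + 1 ≤ m by omega); omega
  rw [goodWords, card_sdiff_of_subset hsub, card_biUnion hdisj, card_window]
  congr 1
  exact sum_congr rfl fun m _ ↦ by rw [card_window, partialSum_succ, Nat.add_sub_cancel_left]

/-- The length of `[s, s + l) ∩ [partialSum u i, partialSum u (i + 1))`. -/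
def overlap (u : Fin n → ℕ) (s l : ℕ) (i : Fin n) : ℕ :=
  min (partialSum u (i + 1) - s) l - min (partialSum u i - s) l

section overlap

variable (u : Fin n → ℕ) (s l : ℕ)

lemma partialSum_overlap (i : ℕ) :
    partialSum (overlap u s l) i = min (partialSum u i - s) l := by
  induction i with
  | zero => simp
  | succ i ih =>
    by_cases hi : i < n
    · have hu := partialSum_succ u ⟨i, hi⟩
      rw [partialSum_succ _ ⟨i, hi⟩, ih, overlap]
      dsimp only at hu ⊢
      omega
    · have hi' : n ≤ i + 1 := by omega
      rw [partialSum_of_le _ hi', ← partialSum_of_le _ (not_lt.1 hi), ih,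
        partialSum_of_le u hi', partialSum_of_le u (not_lt.1 hi)]

lemma sum_overlap (h : s + l ≤ ∑ i, u i) : ∑ i, overlap u s l i = l := by
  rw [← partialSum_of_le _ le_rfl, partialSum_overlap, partialSum_of_le _ le_rfl]
  omega

lemma overlap_add (l' : ℕ) (i : Fin n) :
    overlap u s l i + overlap u (s + l) l' i = overlap u s (l + l') i := by
  have := partialSum_succ u i
  simp only [overlap]
  omega

lemma overlap_le (i : Fin n) : overlap u s l i ≤ u i := by
  have := partialSum_succ u i
  simp only [overlap]
  omega

lemma overlap_eq_self {i : Fin n} (h₁ : s ≤ partialSum u i)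
    (h₂ : partialSum u (i + 1) ≤ s + l) : overlap u s l i = u i := by
  have := partialSum_succ u i
  simp only [overlap]
  omega

lemma lt_of_overlap_ne_zero {i : Fin n} (h : overlap u s l i ≠ 0) :
    s < partialSum u (i + 1) ∧ partialSum u i < s + l := by
  unfold overlap at h
  omega

end overlap

abbrev Monomial (n : ℕ) := (Fin n → ℕ) × (Fin n → ℕ) × (Fin n → ℕ)

def HasMultidegree (u : Fin n → ℕ) (t : Monomial n) : Prop :=
  ∀ i, t.1 i + t.2.1 i + t.2.2 i = u i

/-- `t` lists the exponents of the `x_i`, `y_i`, `z_i`; the last four clauses say that no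
generator of `N_n` divides the monomial. -/
def IsStandard (u : Fin n → ℕ) (t : Monomial n) : Prop :=
  HasMultidegree u t ∧
  ¬ (∃ i k, i < k ∧ 1 ≤ t.1 i ∧ 1 ≤ t.2.1 k) ∧
  ¬ (∃ i j k, i < j ∧ j < k ∧ 1 ≤ t.1 i ∧ 1 ≤ t.2.2 j ∧ 1 ≤ t.1 k) ∧
  ¬ (∃ i j k, i < j ∧ j < k ∧ 1 ≤ t.2.1 i ∧ 1 ≤ t.2.2 j ∧ 1 ≤ t.2.1 k) ∧
  ¬ (∃ i j k, i < j ∧ j < k ∧ 1 ≤ t.2.1 i ∧ 1 ≤ t.2.2 j ∧ 1 ≤ t.1 k)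

lemma isStandard_iff {u : Fin n → ℕ} {t : Monomial n} :
    IsStandard u t ↔ HasMultidegree u t ∧
      (∀ i k, i < k → t.1 i = 0 ∨ t.2.1 k = 0) ∧
      (∀ i j k, i < j → j < k →
        t.1 i + t.2.1 i ≠ 0 → t.1 k + t.2.1 k ≠ 0 → t.2.2 j = 0) := by
  simp only [IsStandard, not_exists, not_and, Nat.one_le_iff_ne_zero]
  refine and_congr_right fun _ ↦
    ⟨fun ⟨hxy, hxzx, hyzy, hyzx⟩ ↦ ⟨?_, ?_⟩,
      fun ⟨hxy, hz⟩ ↦ ⟨?_, ?_, ?_, ?_⟩⟩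
  · intro i k hik
    by_contra! h
    exact hxy i k hik h.1 h.2
  · intro i j k hij hjk hi hk
    by_contra hc
    by_cases ha : t.1 i = 0 <;> by_cases hb : t.1 k = 0
    · exact hyzy i j k hij hjk (by omega) hc (by omega)
    · exact hyzx i j k hij hjk (by omega) hc hb
    · exact hxy i k (hij.trans hjk) ha (by omega)
    · exact hxzx i j k hij hjk ha hc hb
  · intro i k hik ha hb
    exact (hxy i k hik).elim ha hb
  all_goals
    intro i j k hij hjk hi hc hk
    exact hc (hz i j k hij hjk (by omega) (by omega))

def monomialOfWord (u : Fin n → ℕ) (w b a : ℕ) : Monomial n :=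
  (overlap u (w + b) a, overlap u w b, fun i ↦ u i - overlap u w (b + a) i)

lemma fst_add_snd_monomialOfWord (u : Fin n → ℕ) (w b a : ℕ) :
    (monomialOfWord u w b a).1 + (monomialOfWord u w b a).2.1 = overlap u w (b + a) := by
  funext i
  exact (add_comm _ _).trans (overlap_add u w b a i)

lemma isStandard_monomialOfWord (u : Fin n → ℕ) (w b a : ℕ) :
    IsStandard u (monomialOfWord u w b a) := by
  have he := congrFun (fst_add_snd_monomialOfWord u w b a)
  simp only [Pi.add_apply] at he
  rw [isStandard_iff]
  refine ⟨fun i ↦ ?_, fun i k hik ↦ ?_, fun i j k hij hjk hi hk ↦ ?_⟩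
  · have := overlap_le u w (b + a) i
    have := he i
    simp only [monomialOfWord] at this ⊢
    omega
  · by_contra! h
    have h₁ := lt_of_overlap_ne_zero _ _ _ h.1
    have h₂ := lt_of_overlap_ne_zero _ _ _ h.2
    have := partialSum_mono u (show (i : ℕ) + 1 ≤ k by omega)
    omega
  · rw [he] at hi hk
    have h₁ := lt_of_overlap_ne_zero _ _ _ hi
    have h₂ := lt_of_overlap_ne_zero _ _ _ hk
    have := partialSum_mono u (show (i : ℕ) + 1 ≤ j by omega)
    have := partialSum_mono u (show (j : ℕ) + 1 ≤ k by omega)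
    simp only [monomialOfWord]
    rw [overlap_eq_self u w (b + a) (by omega) (by omega), Nat.sub_self]

def leadingZ (t : Monomial n) : ℕ :=
  ∑ i ∈ univ.filter (fun i : Fin n ↦ partialSum (t.1 + t.2.1) i = 0), t.2.2 i

def wordOfMonomial (t : Monomial n) : ℕ × ℕ × ℕ :=
  (leadingZ t, ∑ i, t.2.1 i, ∑ i, t.1 i)

section leadingZ

variable {u : Fin n → ℕ} {t : Monomial n}

lemma leadingZ_le_sum : leadingZ t ≤ ∑ i, t.2.2 i :=
  sum_le_sum_of_subset (filter_subset _ _)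

lemma leadingZ_add_sum {i : ℕ} (hE : partialSum (t.1 + t.2.1) i ≠ 0) :
    leadingZ t + ∑ j ∈ univ.filter
      (fun j : Fin n ↦ (j : ℕ) < i ∧ partialSum (t.1 + t.2.1) j ≠ 0), t.2.2 j =
      partialSum t.2.2 i := by
  have hlt : ∀ j : Fin n, partialSum (t.1 + t.2.1) j = 0 → (j : ℕ) < i := fun j hj ↦ by
    by_contra! hij
    exact hE (Nat.eq_zero_of_le_zero (hj ▸ partialSum_mono _ hij))
  rw [partialSum, ← sum_filter_add_sum_filter_not (univ.filter fun j : Fin n ↦ (j : ℕ) < i)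
    (fun j ↦ partialSum (t.1 + t.2.1) j = 0), filter_filter, filter_filter, leadingZ]
  congr 1
  refine sum_congr (filter_congr fun j _ ↦ ?_) fun _ _ ↦ rfl
  exact ⟨fun h ↦ ⟨hlt j h, h⟩, And.right⟩

lemma partialSum_add_partialSum_eq (hdeg : HasMultidegree u t) (i : ℕ) :
    partialSum (t.1 + t.2.1) i + partialSum t.2.2 i = partialSum u i := by
  rw [← partialSum_add]
  exact congrArg (partialSum · i) (funext hdeg)

lemma partialSum_le_leadingZ (hdeg : HasMultidegree u t) {i : ℕ}
    (hE : partialSum (t.1 + t.2.1) i = 0) : partialSum u i ≤ leadingZ t := by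
  rw [← partialSum_add_partialSum_eq hdeg, hE, zero_add]
  refine sum_le_sum_of_subset fun j hj ↦ ?_
  simp only [mem_filter, mem_univ, true_and] at hj ⊢
  exact Nat.eq_zero_of_le_zero (hE ▸ partialSum_mono _ hj.le)

lemma partialSum_le_sub_leadingZ (hdeg : HasMultidegree u t) (i : ℕ) :
    partialSum (t.1 + t.2.1) i ≤ partialSum u i - leadingZ t := by
  by_cases hE : partialSum (t.1 + t.2.1) i = 0
  · omega
  · have := leadingZ_add_sum hE
    have := partialSum_add_partialSum_eq hdeg i
    omega

lemma leadingZ_add_eq (hdeg : HasMultidegree u t) {i : ℕ}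
    (hE : partialSum (t.1 + t.2.1) i ≠ 0)
    (hc : ∀ j : Fin n, (j : ℕ) < i → partialSum (t.1 + t.2.1) j ≠ 0 → t.2.2 j = 0) :
    leadingZ t + partialSum (t.1 + t.2.1) i = partialSum u i := by
  have := leadingZ_add_sum hE
  rw [sum_eq_zero fun j hj ↦ hc j (mem_filter.1 hj).2.1 (mem_filter.1 hj).2.2] at this
  have := partialSum_add_partialSum_eq hdeg i
  omega

lemma wordOfMonomial_mem_goodWords (hdeg : HasMultidegree u t) :
    wordOfMonomial t ∈ goodWords u := by
  have hE := partialSum_add_partialSum_eq hdeg n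
  simp only [partialSum_of_le _ le_rfl, Pi.add_apply, sum_add_distrib] at hE
  have := leadingZ_le_sum (t := t)
  rw [mem_goodWords]
  refine ⟨by simp only [wordOfMonomial]; omega, fun m ⟨hm₁, hm₂⟩ ↦ ?_⟩
  simp only [wordOfMonomial] at hm₁ hm₂
  by_cases hE₁ : partialSum (t.1 + t.2.1) (m + 1) = 0
  · have := partialSum_le_leadingZ hdeg hE₁
    omega
  have hE₀ : partialSum (t.1 + t.2.1) m = 0 := by
    have := partialSum_le_sub_leadingZ hdeg m
    omega
  have := leadingZ_add_eq hdeg hE₁ fun j hj hEj ↦ absurd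
    (Nat.eq_zero_of_le_zero (hE₀ ▸ partialSum_mono _ (show (j : ℕ) ≤ m by omega))) hEj
  have := partialSum_le_sum (t.1 + t.2.1) (m + 1)
  simp only [Pi.add_apply, sum_add_distrib] at this
  omega

end leadingZ

namespace IsStandard

variable {u : Fin n → ℕ} {t : Monomial n} (ht : IsStandard u t)
include ht

lemma partialSum_fst_eq_zero {i : ℕ} {k : Fin n} (hik : i ≤ k) (hk : t.2.1 k ≠ 0) :
    partialSum t.1 i = 0 :=
  (partialSum_eq_zero_iff _).2 fun j hj ↦
    ((isStandard_iff.1 ht).2.1 j k (by omega)).resolve_right hk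

lemma partialSum_sub_leadingZ {i : ℕ} {k : Fin n} (hik : i ≤ k) (hk : t.1 k + t.2.1 k ≠ 0) :
    partialSum u i - leadingZ t = partialSum (t.1 + t.2.1) i := by
  obtain ⟨hdeg, -, hz⟩ := isStandard_iff.1 ht
  by_cases hE : partialSum (t.1 + t.2.1) i = 0
  · have := partialSum_le_leadingZ hdeg hE
    omega
  have := leadingZ_add_eq hdeg hE fun j hj hEj ↦ by
    obtain ⟨l, hl, hel⟩ : ∃ l : Fin n, (l : ℕ) < j ∧ t.1 l + t.2.1 l ≠ 0 := by
      simpa [partialSum_eq_zero_iff] using hEj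
    exact hz l j k hl (by omega) hel hk
  omega

lemma partialSum_eq (i : ℕ) :
    partialSum t.2.1 i = min (partialSum u i - leadingZ t) (∑ j, t.2.1 j) ∧
      partialSum t.1 i = min (partialSum u i - leadingZ t - ∑ j, t.2.1 j) (∑ j, t.1 j) := by
  have hE := partialSum_add t.1 t.2.1 i
  have hle := partialSum_le_sub_leadingZ (isStandard_iff.1 ht).1 i
  have ha := partialSum_le_sum t.1 i
  have hb := partialSum_le_sum t.2.1 i
  by_cases hb' : ∀ k : Fin n, i ≤ k → t.2.1 k = 0
  · have := partialSum_eq_sum_of_forall _ hb'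
    by_cases ha' : ∀ k : Fin n, i ≤ k → t.1 k = 0
    · have := partialSum_eq_sum_of_forall _ ha'
      omega
    push Not at ha'
    obtain ⟨k, hik, hk⟩ := ha'
    have := partialSum_sub_leadingZ ht hik (by omega)
    omega
  push Not at hb'
  obtain ⟨k, hik, hk⟩ := hb'
  have := partialSum_fst_eq_zero ht hik hk
  have := partialSum_sub_leadingZ ht hik (by omega)
  omega

lemma monomialOfWord_wordOfMonomial :
    monomialOfWord u (leadingZ t) (∑ j, t.2.1 j) (∑ j, t.1 j) = t := by
  have ha : overlap u (leadingZ t + ∑ j, t.2.1 j) (∑ j, t.1 j) = t.1 :=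
    partialSum_injective <| funext fun i ↦ by
      rw [partialSum_overlap, (partialSum_eq ht i).2, Nat.sub_sub]
  have hb : overlap u (leadingZ t) (∑ j, t.2.1 j) = t.2.1 :=
    partialSum_injective <| funext fun i ↦ by rw [partialSum_overlap, (partialSum_eq ht i).1]
  refine Prod.ext ha (Prod.ext hb (funext fun i ↦ ?_))
  have := overlap_add u (leadingZ t) (∑ j, t.2.1 j) (∑ j, t.1 j) i
  have := congrFun ha i
  have := congrFun hb i
  have := (isStandard_iff.1 ht).1 i
  simp only [monomialOfWord]
  omega

end IsStandard

lemma wordOfMonomial_monomialOfWord {u : Fin n → ℕ} {w b a : ℕ}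
    (hs : (w, b, a) ∈ goodWords u) : wordOfMonomial (monomialOfWord u w b a) = (w, b, a) := by
  obtain ⟨hle, hgood⟩ := mem_goodWords.1 hs
  dsimp only at hle hgood
  refine Prod.ext ?_ (Prod.ext (sum_overlap u w b (by omega)) (sum_overlap u (w + b) a hle))
  have hdeg := (isStandard_iff.1 (isStandard_monomialOfWord u w b a)).1
  have hE (i : ℕ) : partialSum ((monomialOfWord u w b a).1 + (monomialOfWord u w b a).2.1) i =
      min (partialSum u i - w) (b + a) := by
    rw [fst_add_snd_monomialOfWord, partialSum_overlap]
  change leadingZ (monomialOfWord u w b a) = w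
  generalize monomialOfWord u w b a = t at hdeg hE ⊢
  rcases eq_or_lt_of_le (show w ≤ ∑ i, u i by omega) with hw | hw
  · have hE₀ : partialSum (t.1 + t.2.1) n = 0 := by rw [hE]; omega
    have h₁ := partialSum_le_leadingZ hdeg hE₀
    have h₂ := partialSum_add_partialSum_eq hdeg n
    have := leadingZ_le_sum (t := t)
    rw [partialSum_of_le u le_rfl] at h₁ h₂
    rw [partialSum_of_le t.2.2 le_rfl] at h₂
    omega
  obtain ⟨m, hm₁, hm₂⟩ := exists_partialSum_le_lt u hw
  have hc : ∀ j : Fin n, (j : ℕ) < m + 1 →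
      partialSum (t.1 + t.2.1) j ≠ 0 → t.2.2 j = 0 := by
    intro j hj hEj
    have := partialSum_mono u (show (j : ℕ) ≤ m by omega)
    rw [hE] at hEj
    omega
  have := hgood m
  have := hE (m + 1)
  have := leadingZ_add_eq hdeg (by omega) hc
  omega

def standardEquivGoodWords (u : Fin n → ℕ) : {t // IsStandard u t} ≃ goodWords u where
  toFun t := ⟨wordOfMonomial t.1, wordOfMonomial_mem_goodWords (isStandard_iff.1 t.2).1⟩
  invFun s := ⟨monomialOfWord u s.1.1 s.1.2.1 s.1.2.2, isStandard_monomialOfWord u _ _ _⟩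
  left_inv t := Subtype.ext t.2.monomialOfWord_wordOfMonomial
  right_inv s := Subtype.ext (wordOfMonomial_monomialOfWord (w := s.1.1) (b := s.1.2.1) s.2)

end StandardMonomials

theorem stmt2_general (n : ℕ) (u : Fin n → ℕ) :
    Nat.card {t : (Fin n → ℕ) × (Fin n → ℕ) × (Fin n → ℕ) //
      (∀ i, t.1 i + t.2.1 i + t.2.2 i = u i) ∧
      ¬ (∃ i k, i < k ∧ 1 ≤ t.1 i ∧ 1 ≤ t.2.1 k) ∧
      ¬ (∃ i j k, i < j ∧ j < k ∧ 1 ≤ t.1 i ∧ 1 ≤ t.2.2 j ∧ 1 ≤ t.1 k) ∧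
      ¬ (∃ i j k, i < j ∧ j < k ∧ 1 ≤ t.2.1 i ∧ 1 ≤ t.2.2 j ∧ 1 ≤ t.2.1 k) ∧
      ¬ (∃ i j k, i < j ∧ j < k ∧ 1 ≤ t.2.1 i ∧ 1 ≤ t.2.2 j ∧ 1 ≤ t.1 k)} =
    Nat.choose (∑ i, u i + 3) 3 - ∑ i, Nat.choose (u i + 2) 3 := by
  rw [← StandardMonomials.card_goodWords u, ← Nat.card_eq_finsetCard]
  exact Nat.card_congr (StandardMonomials.standardEquivGoodWords u)

/-- The number of monomials `x^a y^b z^c` of multidegree `u` not lying in the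
monomial ideal `N_n = ⟨x_i y_k : i<k⟩ + ⟨x_i z_j x_k, y_i z_j y_k, y_i z_j x_k : i<j<k⟩`
equals `C(u_1+⋯+u_n+3,3) - Σ_i C(u_i+2,3)`.  Here `a` records the `x`-exponents,
`b` the `y`-exponents and `c` the `z`-exponents. -/
theorem stmt2 (n : ℕ) (hn : 2 ≤ n) (u : Fin n → ℕ) :
    Nat.card {t : (Fin n → ℕ) × (Fin n → ℕ) × (Fin n → ℕ) //
      (∀ i, t.1 i + t.2.1 i + t.2.2 i = u i) ∧
      ¬ (∃ i k, i < k ∧ 1 ≤ t.1 i ∧ 1 ≤ t.2.1 k) ∧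
      ¬ (∃ i j k, i < j ∧ j < k ∧ 1 ≤ t.1 i ∧ 1 ≤ t.2.2 j ∧ 1 ≤ t.1 k) ∧
      ¬ (∃ i j k, i < j ∧ j < k ∧ 1 ≤ t.2.1 i ∧ 1 ≤ t.2.2 j ∧ 1 ≤ t.2.1 k) ∧
      ¬ (∃ i j k, i < j ∧ j < k ∧ 1 ≤ t.2.1 i ∧ 1 ≤ t.2.2 j ∧ 1 ≤ t.1 k)} =
    Nat.choose (∑ i, u i + 3) 3 - ∑ i, Nat.choose (u i + 2) 3 :=
  stmt2_general n u
end

section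
/- Every monomial of multidegree u not in N_n has the form z^a y^b x^c z^d where u = a+b+c+d and there exist indices 1 ≤ i ≤ j ≤ k ≤ n such that a is supported on {1,...,i}, b on {i,...,j}, c on {j,...,k}, and d on {k,...,n}. -/
/-- Every monomial of multidegree `u` not in `N_n` has the form `z^a y^b x^c z^d`
where the supports of `a, b, c, d` are consecutive: there exist `i ≤ j ≤ k` with
`a` supported on `{1,…,i}`, `b` on `{i,…,j}`, `c` on `{j,…,k}` and `d` on `{k,…,n}`.
Here `α, β, γ` are the `x`-, `y`- and `z`-exponent vectors of the monomial. -/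
theorem stmt3 (n : ℕ) (hn : 2 ≤ n) (u : Fin n → ℕ) (α β γ : Fin n → ℕ)
    (hdeg : ∀ i, α i + β i + γ i = u i)
    (h1 : ¬ ∃ i k, i < k ∧ 1 ≤ α i ∧ 1 ≤ β k)
    (h2 : ¬ ∃ i j k, i < j ∧ j < k ∧ 1 ≤ α i ∧ 1 ≤ γ j ∧ 1 ≤ α k)
    (h3 : ¬ ∃ i j k, i < j ∧ j < k ∧ 1 ≤ β i ∧ 1 ≤ γ j ∧ 1 ≤ β k)
    (h4 : ¬ ∃ i j k, i < j ∧ j < k ∧ 1 ≤ β i ∧ 1 ≤ γ j ∧ 1 ≤ α k) :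
    ∃ (a d : Fin n → ℕ) (i j k : Fin n), i ≤ j ∧ j ≤ k ∧
      (∀ m, γ m = a m + d m) ∧
      (∀ m, a m ≠ 0 → m ≤ i) ∧
      (∀ m, β m ≠ 0 → i ≤ m ∧ m ≤ j) ∧
      (∀ m, α m ≠ 0 → j ≤ m ∧ m ≤ k) ∧
      (∀ m, d m ≠ 0 → k ≤ m) := by
  push_neg at h1 h2 h3 h4
  by_cases hβ : ∃ m, β m ≠ 0
  · -- β has nonempty support
    set Sβ : Finset (Fin n) := Finset.univ.filter (fun m => β m ≠ 0) with hSβ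
    have hSβne : Sβ.Nonempty := by
      obtain ⟨m, hm⟩ := hβ
      exact ⟨m, by simp [hSβ, hm]⟩
    set i := Sβ.min' hSβne with hi
    have hiβ : β i ≠ 0 := by
      have := Sβ.min'_mem hSβne
      simpa [hSβ] using this
    have hile : ∀ m, β m ≠ 0 → i ≤ m := fun m hm =>
      Sβ.min'_le m (by simp [hSβ, hm])
    by_cases hα : ∃ m, α m ≠ 0
    · -- both β and α nonempty
      set Sα : Finset (Fin n) := Finset.univ.filter (fun m => α m ≠ 0) with hSα
      have hSαne : Sα.Nonempty := by
        obtain ⟨m, hm⟩ := hα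
        exact ⟨m, by simp [hSα, hm]⟩
      set j := Sβ.max' hSβne with hj
      set k := Sα.max' hSαne with hk
      have hjβ : β j ≠ 0 := by
        have := Sβ.max'_mem hSβne
        simpa [hSβ] using this
      have hkα : α k ≠ 0 := by
        have := Sα.max'_mem hSαne
        simpa [hSα] using this
      have hjle : ∀ m, β m ≠ 0 → m ≤ j := fun m hm =>
        Sβ.le_max' m (by simp [hSβ, hm])
      have hkle : ∀ m, α m ≠ 0 → m ≤ k := fun m hm =>
        Sα.le_max' m (by simp [hSα, hm])
      have hjα : ∀ m, α m ≠ 0 → j ≤ m := by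
        intro m hm
        by_contra hc
        push_neg at hc
        exact hjβ (Nat.lt_one_iff.mp (h1 m j hc (Nat.one_le_iff_ne_zero.mpr hm)))
      refine ⟨fun m => if m ≤ i then γ m else 0, fun m => if m ≤ i then 0 else γ m,
        i, j, k, Sβ.min'_le j (Sβ.max'_mem hSβne), le_trans (hjα k hkα) le_rfl,
        ?_, ?_, ?_, ?_, ?_⟩
      · intro m; by_cases h : m ≤ i <;> simp [h]
      · intro m hm; by_contra hc; simp [hc] at hm
      · exact fun m hm => ⟨hile m hm, hjle m hm⟩
      · exact fun m hm => ⟨hjα m hm, hkle m hm⟩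
      · intro m hm
        by_cases hmi : m ≤ i
        · simp [hmi] at hm
        · simp [hmi] at hm
          push_neg at hmi
          by_contra hc
          push_neg at hc
          exact hkα (Nat.lt_one_iff.mp (h4 i m k hmi hc (Nat.one_le_iff_ne_zero.mpr hiβ)
            (Nat.one_le_iff_ne_zero.mpr hm)))
    · -- β nonempty, α empty
      push_neg at hα
      set j := Sβ.max' hSβne with hj
      have hjβ : β j ≠ 0 := by
        have := Sβ.max'_mem hSβne
        simpa [hSβ] using this
      have hjle : ∀ m, β m ≠ 0 → m ≤ j := fun m hm =>
        Sβ.le_max' m (by simp [hSβ, hm])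
      refine ⟨fun m => if m ≤ i then γ m else 0, fun m => if m ≤ i then 0 else γ m,
        i, j, j, Sβ.min'_le j (Sβ.max'_mem hSβne), le_rfl, ?_, ?_, ?_, ?_, ?_⟩
      · intro m; by_cases h : m ≤ i <;> simp [h]
      · intro m hm; by_contra hc; simp [hc] at hm
      · exact fun m hm => ⟨hile m hm, hjle m hm⟩
      · intro m hm; exact absurd (hα m) hm
      · intro m hm
        by_cases hmi : m ≤ i
        · simp [hmi] at hm
        · simp [hmi] at hm
          push_neg at hmi
          by_contra hc
          push_neg at hc
          exact hjβ (Nat.lt_one_iff.mp (h3 i m j hmi hc (Nat.one_le_iff_ne_zero.mpr hiβ)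
            (Nat.one_le_iff_ne_zero.mpr hm)))
  · push_neg at hβ
    by_cases hα : ∃ m, α m ≠ 0
    · -- β empty, α nonempty
      set Sα : Finset (Fin n) := Finset.univ.filter (fun m => α m ≠ 0) with hSα
      have hSαne : Sα.Nonempty := by
        obtain ⟨m, hm⟩ := hα
        exact ⟨m, by simp [hSα, hm]⟩
      set j := Sα.min' hSαne with hj
      set k := Sα.max' hSαne with hk
      have hjα : α j ≠ 0 := by
        have := Sα.min'_mem hSαne
        simpa [hSα] using this
      have hkα : α k ≠ 0 := by
        have := Sα.max'_mem hSαne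
        simpa [hSα] using this
      have hjle : ∀ m, α m ≠ 0 → j ≤ m := fun m hm =>
        Sα.min'_le m (by simp [hSα, hm])
      have hkle : ∀ m, α m ≠ 0 → m ≤ k := fun m hm =>
        Sα.le_max' m (by simp [hSα, hm])
      refine ⟨fun m => if m ≤ j then γ m else 0, fun m => if m ≤ j then 0 else γ m,
        j, j, k, le_rfl, Sα.min'_le k (Sα.max'_mem hSαne), ?_, ?_, ?_, ?_, ?_⟩
      · intro m; by_cases h : m ≤ j <;> simp [h]
      · intro m hm; by_contra hc; simp [hc] at hm
      · intro m hm; exact absurd (hβ m) hm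
      · exact fun m hm => ⟨hjle m hm, hkle m hm⟩
      · intro m hm
        by_cases hmj : m ≤ j
        · simp [hmj] at hm
        · simp [hmj] at hm
          push_neg at hmj
          by_contra hc
          push_neg at hc
          exact hkα (Nat.lt_one_iff.mp (h2 j m k hmj hc (Nat.one_le_iff_ne_zero.mpr hjα)
            (Nat.one_le_iff_ne_zero.mpr hm)))
    · -- both empty
      push_neg at hα
      have hpos : 0 < n := by omega
      refine ⟨γ, fun _ => 0, ⟨n - 1, by omega⟩, ⟨n - 1, by omega⟩, ⟨n - 1, by omega⟩,
        le_rfl, le_rfl, fun m => by simp, ?_, ?_, ?_, ?_⟩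
      · intro m _
        have := m.isLt
        simp only [Fin.le_def]
        omega
      · intro m hm; exact absurd (hβ m) hm
      · intro m hm; exact absurd (hα m) hm
      · intro m hm; exact absurd rfl hm
end

section
/- For n ≥ 3, the binomial ideal L_n := ⟨x_i y_j - x_j y_i : 1 ≤ i < j ≤ n⟩ + ⟨x_i z_j x_k - z_i x_j x_k, y_i z_j y_k - z_i y_j y_k, y_i z_j x_k - z_i y_j x_k : 1 ≤ i < j < k ≤ n⟩ equals the intersection I_3 ∩ I_4 ∩ ... ∩ I_{n+1}, where I_t := ⟨x_i, y_i : t ≤ i ≤ n⟩ + ⟨x_i y_j - x_j y_i : 1 ≤ i < j < t⟩ + ⟨x_i z_j - x_j z_i, y_i z_j - y_j z_i : 1 ≤ i < j < t-1⟩. -/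
open MvPolynomial

noncomputable section

variable (K : Type*) [Field K] [IsAlgClosed K] (n : ℕ)

/-- The variable `z_i`. -/
def Zv (i : Fin n) : MvPolynomial (Fin n × Fin 3) K := MvPolynomial.X (i, 2)

/-- The binomial ideal `L_n`. -/
def Lideal : Ideal (MvPolynomial (Fin n × Fin 3) K) :=
  Ideal.span ({p | ∃ i j : Fin n, i < j ∧ p = Xv K n i * Yv K n j - Xv K n j * Yv K n i} ∪
    {p | ∃ i j k : Fin n, i < j ∧ j < k ∧
      p = Xv K n i * Zv K n j * Xv K n k - Zv K n i * Xv K n j * Xv K n k} ∪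
    {p | ∃ i j k : Fin n, i < j ∧ j < k ∧
      p = Yv K n i * Zv K n j * Yv K n k - Zv K n i * Yv K n j * Yv K n k} ∪
    {p | ∃ i j k : Fin n, i < j ∧ j < k ∧
      p = Yv K n i * Zv K n j * Xv K n k - Zv K n i * Yv K n j * Xv K n k})

/-- The prime component `I_t`, for `3 ≤ t ≤ n+1` (indices are 1-based:
the variable of index `i : Fin n` is the paper's index `i+1`). -/
def Iideal (t : ℕ) : Ideal (MvPolynomial (Fin n × Fin 3) K) :=
  Ideal.span ({p | ∃ i : Fin n, t ≤ (i : ℕ) + 1 ∧ (p = Xv K n i ∨ p = Yv K n i)} ∪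
    {p | ∃ i j : Fin n, i < j ∧ (j : ℕ) + 1 < t ∧
      p = Xv K n i * Yv K n j - Xv K n j * Yv K n i} ∪
    {p | ∃ i j : Fin n, i < j ∧ (j : ℕ) + 1 < t - 1 ∧
      (p = Xv K n i * Zv K n j - Xv K n j * Zv K n i ∨
       p = Yv K n i * Zv K n j - Yv K n j * Zv K n i)})

/-!
Both `L_n` and every `I_t` are generated by variables and pure difference binomials
`x^a - x^b`. Hence `f ∈ L_n` as soon as, on every class of the equivalence on exponents
generated by the moves `u + a ↔ u + b` of the binomial generators of `L_n`, the coefficients of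
`f` sum to zero; and this class sum vanishes on `I_t` whenever the class is a union of classes
of the moves of `I_t` and contains no multiple of an `x_i` or `y_i` with `i ≥ t`.

Given an exponent `d`, let `t - 1 ≥ 2` be the last index `m` with `x_m` or `y_m` dividing `x^d`
(and `t = 3` if there is none beyond `2`). Every `L_n`-move fixes the `x,y`-degrees from some
index on that carries `x,y`-weight, so the whole class of `d` keeps the `x,y`-degrees of `d` at
the indices `≥ t - 1`; in particular no element is divisible by `x_i, y_i`, `i ≥ t`. The moves of
`I_t` are moves of `L_n`, except for `x_i z_j ↔ x_j z_i` and `y_i z_j ↔ y_j z_i` with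
`j < t - 1`, which become chains of `L_n`-moves once multiplied by the `x_{t-1}` or `y_{t-1}`
present throughout the class.
-/

namespace MvPolynomial

variable {σ R : Type*} [CommRing R]

open scoped Classical in
noncomputable def coeffSumOn (s : Set (σ →₀ ℕ)) : MvPolynomial σ R →ₗ[R] R :=
  (basisMonomials σ R).constr R fun e ↦ if e ∈ s then 1 else 0

open scoped Classical in
theorem coeffSumOn_monomial (s : Set (σ →₀ ℕ)) (e : σ →₀ ℕ) (c : R) :
    coeffSumOn s (monomial e c) = if e ∈ s then c else 0 := by
  have : monomial e (1 : R) = basisMonomials σ R e := rfl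
  rw [← mul_one c, ← smul_eq_mul, ← smul_monomial, map_smul, this, coeffSumOn,
    Module.Basis.constr_basis]
  split_ifs <;> simp

open scoped Classical in
theorem coeffSumOn_apply (s : Set (σ →₀ ℕ)) (f : MvPolynomial σ R) :
    coeffSumOn s f = ∑ e ∈ f.support with e ∈ s, coeff e f := by
  conv_lhs => rw [f.as_sum, map_sum]
  simp only [coeffSumOn_monomial, Finset.sum_filter]

theorem coeffSumOn_eq_zero_of_mem_span {S : Set (MvPolynomial σ R)} {s : Set (σ →₀ ℕ)}
    (hS : ∀ g ∈ S, ∀ u, coeffSumOn s (monomial u (1 : R) * g) = 0) {f : MvPolynomial σ R}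
    (hf : f ∈ Ideal.span S) : coeffSumOn s f = 0 := by
  suffices ∀ q, coeffSumOn s (q * f) = 0 by simpa using this 1
  induction hf using Submodule.span_induction with
  | mem g hg =>
    intro q
    induction q using MvPolynomial.induction_on' with
    | monomial u c =>
      rw [show monomial u c * g = c • (monomial u 1 * g) by
        rw [← smul_mul_assoc, smul_monomial, smul_eq_mul, mul_one], map_smul, hS g hg u, smul_zero]
    | add p q hp hq => rw [add_mul, map_add, hp, hq, add_zero]
  | zero => simp
  | add x y _ _ hx hy => intro q; rw [mul_add, map_add, hx, hy, add_zero]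
  | smul a x _ hx => intro q; rw [smul_eq_mul, ← mul_assoc]; exact hx _

theorem monomial_sub_mem_of_eqvGen {r : (σ →₀ ℕ) → (σ →₀ ℕ) → Prop}
    {I : Ideal (MvPolynomial σ R)} (hr : ∀ a b, r a b → monomial a (1 : R) - monomial b 1 ∈ I)
    {a b : σ →₀ ℕ} (hab : Relation.EqvGen r a b) (c : R) : monomial a c - monomial b c ∈ I := by
  induction hab with
  | rel a b h => simpa [mul_sub, C_mul_monomial] using I.mul_mem_left (C c) (hr a b h)
  | refl => simp
  | symm a b _ ih => simpa using I.neg_mem ih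
  | trans a b c _ _ ih₁ ih₂ => simpa using I.add_mem ih₁ ih₂

theorem mem_of_coeffSumOn_eqvGen_eq_zero {r : (σ →₀ ℕ) → (σ →₀ ℕ) → Prop}
    {I : Ideal (MvPolynomial σ R)} (hr : ∀ a b, r a b → monomial a (1 : R) - monomial b 1 ∈ I)
    {f : MvPolynomial σ R} (hf : ∀ d, coeffSumOn {e | Relation.EqvGen r e d} f = 0) :
    f ∈ I := by
  classical
  let rep : (σ →₀ ℕ) → (σ →₀ ℕ) := fun e ↦ (Quot.mk r e).out
  have rep_eq_iff : ∀ a b, rep a = rep b ↔ Relation.EqvGen r a b := fun a b ↦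
    ⟨fun h ↦ Quot.eqvGen_exact <| by simpa [rep] using congrArg (Quot.mk r) h,
     fun h ↦ congrArg Quot.out (Quot.eqvGen_sound h)⟩
  have hrep : ∀ e, Relation.EqvGen r e (rep e) := fun e ↦
    Quot.eqvGen_exact (Quot.out_eq (Quot.mk r e)).symm
  -- `f` is congruent modulo `I` to the polynomial obtained by moving each term of `f` to the
  -- representative of its class; that polynomial collects the class sums of `f`, so it is zero.
  set g := ∑ e ∈ f.support, monomial (rep e) (coeff e f)
  have hg : g = 0 := by
    ext d
    simp only [g, coeff_sum, coeff_monomial, coeff_zero]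
    rw [← Finset.sum_filter]
    by_cases hd : ∃ e, rep e = d
    · obtain ⟨e₀, rfl⟩ := hd
      simpa [coeffSumOn_apply, rep_eq_iff] using hf e₀
    · push Not at hd
      simp [hd]
  have hfg : f - g ∈ I := by
    have : f - g = ∑ e ∈ f.support, (monomial e (coeff e f) - monomial (rep e) (coeff e f)) := by
      rw [Finset.sum_sub_distrib, ← f.as_sum]
    rw [this]
    exact I.sum_mem fun e _ ↦ monomial_sub_mem_of_eqvGen hr (hrep e) _
  simpa [hg] using hfg

end MvPolynomial

section Moves

variable {n : ℕ}

abbrev Exponent (n : ℕ) := Fin n × Fin 3 →₀ ℕ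

def expX (i : Fin n) : Exponent n := Finsupp.single (i, 0) 1
def expY (i : Fin n) : Exponent n := Finsupp.single (i, 1) 1
def expZ (i : Fin n) : Exponent n := Finsupp.single (i, 2) 1

def xyDeg (e : Exponent n) (c : Fin n) : ℕ := e (c, 0) + e (c, 1)

@[simp] lemma xyDeg_add (a b : Exponent n) (c : Fin n) :
    xyDeg (a + b) c = xyDeg a c + xyDeg b c := by
  simp only [xyDeg, Finsupp.add_apply]; ring

@[simp] lemma xyDeg_expX (i c : Fin n) : xyDeg (expX i) c = if i = c then 1 else 0 := by
  simp [xyDeg, expX, Finsupp.single_apply]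

@[simp] lemma xyDeg_expY (i c : Fin n) : xyDeg (expY i) c = if i = c then 1 else 0 := by
  simp [xyDeg, expY, Finsupp.single_apply]

@[simp] lemma xyDeg_expZ (i c : Fin n) : xyDeg (expZ i) c = 0 := by
  simp [xyDeg, expZ]

/-- `LMove a b` says that `x^a - x^b` is a monomial multiple of a generator of `L_n`. -/
inductive LMove : Exponent n → Exponent n → Prop
  | xy (u : Exponent n) {i j : Fin n} (hij : i < j) :
      LMove (u + expX i + expY j) (u + expX j + expY i)
  | xzx (u : Exponent n) {i j k : Fin n} (hij : i < j) (hjk : j < k) :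
      LMove (u + expX i + expZ j + expX k) (u + expZ i + expX j + expX k)
  | yzy (u : Exponent n) {i j k : Fin n} (hij : i < j) (hjk : j < k) :
      LMove (u + expY i + expZ j + expY k) (u + expZ i + expY j + expY k)
  | yzx (u : Exponent n) {i j k : Fin n} (hij : i < j) (hjk : j < k) :
      LMove (u + expY i + expZ j + expX k) (u + expZ i + expY j + expX k)

/-- `IMove t a b` says that `x^a - x^b` is a monomial multiple of a binomial generator of
`I_t`. -/
inductive IMove (t : ℕ) : Exponent n → Exponent n → Prop
  | xy (u : Exponent n) {i j : Fin n} (hij : i < j) (hj : (j : ℕ) + 1 < t) :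
      IMove t (u + expX i + expY j) (u + expX j + expY i)
  | xz (u : Exponent n) {i j : Fin n} (hij : i < j) (hj : (j : ℕ) + 1 < t - 1) :
      IMove t (u + expX i + expZ j) (u + expX j + expZ i)
  | yz (u : Exponent n) {i j : Fin n} (hij : i < j) (hj : (j : ℕ) + 1 < t - 1) :
      IMove t (u + expY i + expZ j) (u + expY j + expZ i)

def XYBoundedBy (c : Fin n) (e : Exponent n) : Prop := ∀ i, c < i → xyDeg e i = 0

lemma LMove.exists_anchor {a b : Exponent n} (h : LMove a b) :
    ∃ k : Fin n, 0 < xyDeg a k ∧ ∀ c, k ≤ c → xyDeg a c = xyDeg b c := by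
  cases h with
  | @xy u i j hij =>
    refine ⟨j, by simp, fun c _ ↦ ?_⟩
    simp only [xyDeg_add, xyDeg_expX, xyDeg_expY]
    split_ifs <;> omega
  | @xzx u i j k hij hjk | @yzy u i j k hij hjk | @yzx u i j k hij hjk =>
    refine ⟨k, by simp, fun c hc ↦ ?_⟩
    have := Fin.lt_def.1 hij; have := Fin.lt_def.1 hjk; have := Fin.le_def.1 hc
    simp only [xyDeg_add, xyDeg_expX, xyDeg_expY, xyDeg_expZ]
    split_ifs <;> omega

lemma LMove.xyDeg_eq_of_xyBoundedBy {a b : Exponent n} (h : LMove a b) {c : Fin n}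
    (hc : XYBoundedBy c a ∨ XYBoundedBy c b) {i : Fin n} (hi : c ≤ i) :
    xyDeg a i = xyDeg b i := by
  obtain ⟨k, hk, hab⟩ := h.exists_anchor
  have hkc : k ≤ c := not_lt.1 fun hck ↦
    hk.ne' (hc.elim (· k hck) fun hb ↦ hab k le_rfl ▸ hb k hck)
  exact hab i (hkc.trans hi)

lemma xyDeg_eq_of_eqvGen_lMove {c : Fin n} {d e : Exponent n} (hd : XYBoundedBy c d)
    (he : Relation.EqvGen LMove e d) {i : Fin n} (hi : c ≤ i) : xyDeg e i = xyDeg d i := by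
  let P : Exponent n → Prop := fun a ↦ ∀ i, c ≤ i → xyDeg a i = xyDeg d i
  have hbounded : ∀ a, P a → XYBoundedBy c a := fun a ha i hi ↦ (ha i hi.le).trans (hd i hi)
  have hP : ∀ a b, LMove a b → P a = P b := fun a b h ↦ propext
    ⟨fun ha i hi ↦ (h.xyDeg_eq_of_xyBoundedBy (.inl (hbounded a ha)) hi).symm.trans (ha i hi),
     fun hb i hi ↦ (h.xyDeg_eq_of_xyBoundedBy (.inr (hbounded b hb)) hi).trans (hb i hi)⟩
  have hPe : P e = P d := congrArg (Quot.lift P hP) (Quot.eqvGen_sound he)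
  exact (hPe ▸ fun _ _ ↦ rfl : P e) i hi

lemma IMove.xyDeg_eq {c : Fin n} {a b : Exponent n} (h : IMove (c + 2) a b) :
    xyDeg a c = xyDeg b c := by
  cases h with
  | xy u hij => simp only [xyDeg_add, xyDeg_expX, xyDeg_expY]; split_ifs <;> omega
  | @xz u i j hij hj | @yz u i j hij hj =>
    have := Fin.lt_def.1 hij
    have hic : i ≠ c := Fin.ne_of_val_ne (by omega)
    have hjc : j ≠ c := Fin.ne_of_val_ne (by omega)
    simp [hic, hjc]

lemma exists_eq_add_expX_or_expY {u : Exponent n} {c : Fin n} (h : 0 < xyDeg u c) :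
    ∃ u', u = u' + expX c ∨ u = u' + expY c := by
  have key : ∀ s, u s ≠ 0 → u = (u - Finsupp.single s 1) + Finsupp.single s 1 := fun s hs ↦
    (tsub_add_cancel_of_le (Finsupp.single_le_iff.2 (Nat.one_le_iff_ne_zero.2 hs))).symm
  rcases Nat.eq_zero_or_pos (u (c, 0)) with h0 | h0
  · exact ⟨_, Or.inr (key (c, 1) (by unfold xyDeg at h; omega))⟩
  · exact ⟨_, Or.inl (key (c, 0) h0.ne')⟩

lemma IMove.eqvGen_lMove {c : Fin n} {a b : Exponent n} (h : IMove (c + 2) a b)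
    (ha : 0 < xyDeg a c) : Relation.EqvGen LMove a b := by
  cases h with
  | xy u hij => exact .rel _ _ (.xy u hij)
  | @xz u i j hij hj =>
    have hjc : j < c := Fin.lt_def.2 (by omega)
    obtain ⟨u, rfl | rfl⟩ := exists_eq_add_expX_or_expY (c := c) (u := u)
      (by simpa [(hij.trans hjc).ne, hjc.ne] using ha)
    · exact .rel _ _ (by convert LMove.xzx u hij hjc using 1 <;> abel)
    -- x_i z_j y_c → y_i z_j x_c → z_i y_j x_c ← x_j z_i y_c
    · have m₁ : LMove (u + expY c + expX i + expZ j) (u + expY i + expZ j + expX c) := by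
        convert LMove.xy (u + expZ j) (hij.trans hjc) using 1 <;> abel
      have m₂ : LMove (u + expY i + expZ j + expX c) (u + expZ i + expY j + expX c) :=
        .yzx u hij hjc
      have m₃ : LMove (u + expY c + expX j + expZ i) (u + expZ i + expY j + expX c) := by
        convert LMove.xy (u + expZ i) hjc using 1 <;> abel
      exact .trans _ _ _ (.rel _ _ m₁) (.trans _ _ _ (.rel _ _ m₂) (.symm _ _ (.rel _ _ m₃)))
  | @yz u i j hij hj =>
    have hjc : j < c := Fin.lt_def.2 (by omega)
    obtain ⟨u, rfl | rfl⟩ := exists_eq_add_expX_or_expY (c := c) (u := u)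
      (by simpa [(hij.trans hjc).ne, hjc.ne] using ha)
    · exact .rel _ _ (by convert LMove.yzx u hij hjc using 1 <;> abel)
    · exact .rel _ _ (by convert LMove.yzy u hij hjc using 1 <;> abel)

lemma LMove.of_iMove_three {a b : Exponent n} (h : IMove 3 a b) : LMove a b := by
  cases h with
  | xy u hij => exact .xy u hij
  | @xz u i j hij hj | @yz u i j hij hj => have := Fin.lt_def.1 hij; omega

lemma eqvGen_lMove_iff_of_iMove {c : Fin n} {d a b : Exponent n} (hd : XYBoundedBy c d)
    (hc : (c : ℕ) = 1 ∨ 0 < xyDeg d c) (h : IMove (c + 2) a b) :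
    Relation.EqvGen LMove a d ↔ Relation.EqvGen LMove b d := by
  have hab : Relation.EqvGen LMove a d ∨ Relation.EqvGen LMove b d →
      Relation.EqvGen LMove a b := by
    intro hx
    rcases hc with hc | hc
    · rw [hc] at h
      exact .rel _ _ (.of_iMove_three h)
    · refine h.eqvGen_lMove ?_
      rcases hx with hx | hx
      · rwa [xyDeg_eq_of_eqvGen_lMove hd hx le_rfl]
      · rwa [h.xyDeg_eq, xyDeg_eq_of_eqvGen_lMove hd hx le_rfl]
  exact ⟨fun ha ↦ .trans _ _ _ (.symm _ _ (hab (.inl ha))) ha,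
    fun hb ↦ .trans _ _ _ (hab (.inr hb)) hb⟩

/-- `c` is the last index of `x,y`-weight of `d`, or `1` if that is smaller. -/
lemma exists_xyBoundedBy_column (hn : 3 ≤ n) (d : Exponent n) :
    ∃ c : Fin n, 1 ≤ (c : ℕ) ∧ XYBoundedBy c d ∧ ((c : ℕ) = 1 ∨ 0 < xyDeg d c) := by
  let one : Fin n := ⟨1, by omega⟩
  obtain ⟨c, hc, hmax⟩ := (Finset.univ.filter fun i : Fin n ↦ i = one ∨ 0 < xyDeg d i)
    |>.exists_max_image id ⟨one, by simp⟩
  simp only [Finset.mem_filter, Finset.mem_univ, true_and, id, forall_eq_or_imp] at hc hmax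
  refine ⟨c, hmax.1, fun i hi ↦ ?_, hc.imp_left fun h ↦ by simp [h, one]⟩
  by_contra hi'
  exact (hmax.2 i (Nat.pos_of_ne_zero hi')).not_gt hi

end Moves

section Ideals

variable {K : Type*} [Field K] {n : ℕ}

lemma monomial_add_expX (u : Exponent n) (i : Fin n) :
    monomial (u + expX i) (1 : K) = monomial u 1 * Xv K n i := by
  rw [expX, monomial_add_single, pow_one, Xv]

lemma monomial_add_expY (u : Exponent n) (i : Fin n) :
    monomial (u + expY i) (1 : K) = monomial u 1 * Yv K n i := by
  rw [expY, monomial_add_single, pow_one, Yv]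

lemma monomial_add_expZ (u : Exponent n) (i : Fin n) :
    monomial (u + expZ i) (1 : K) = monomial u 1 * Zv K n i := by
  rw [expZ, monomial_add_single, pow_one, Zv]

lemma LMove.monomial_sub_mem_Lideal {a b : Exponent n} (h : LMove a b) :
    monomial a (1 : K) - monomial b 1 ∈ Lideal K n := by
  cases h with
  | @xy u i j hij =>
    have hg : Xv K n i * Yv K n j - Xv K n j * Yv K n i ∈ Lideal K n :=
      Ideal.subset_span (Or.inl (Or.inl (Or.inl ⟨i, j, hij, rfl⟩)))
    simpa only [mul_sub, ← mul_assoc, ← monomial_add_expX, ← monomial_add_expY]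
      using Ideal.mul_mem_left _ (monomial u 1) hg
  | @xzx u i j k hij hjk =>
    have hg : Xv K n i * Zv K n j * Xv K n k - Zv K n i * Xv K n j * Xv K n k ∈ Lideal K n :=
      Ideal.subset_span (Or.inl (Or.inl (Or.inr ⟨i, j, k, hij, hjk, rfl⟩)))
    simpa only [mul_sub, ← mul_assoc, ← monomial_add_expX, ← monomial_add_expZ]
      using Ideal.mul_mem_left _ (monomial u 1) hg
  | @yzy u i j k hij hjk =>
    have hg : Yv K n i * Zv K n j * Yv K n k - Zv K n i * Yv K n j * Yv K n k ∈ Lideal K n :=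
      Ideal.subset_span (Or.inl (Or.inr ⟨i, j, k, hij, hjk, rfl⟩))
    simpa only [mul_sub, ← mul_assoc, ← monomial_add_expY, ← monomial_add_expZ]
      using Ideal.mul_mem_left _ (monomial u 1) hg
  | @yzx u i j k hij hjk =>
    have hg : Yv K n i * Zv K n j * Xv K n k - Zv K n i * Yv K n j * Xv K n k ∈ Lideal K n :=
      Ideal.subset_span (Or.inr ⟨i, j, k, hij, hjk, rfl⟩)
    simpa only [mul_sub, ← mul_assoc, ← monomial_add_expX, ← monomial_add_expY,
      ← monomial_add_expZ] using Ideal.mul_mem_left _ (monomial u 1) hg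

lemma Lideal_le_Iideal (t : ℕ) : Lideal K n ≤ Iideal K n t := by
  have hx : ∀ i : Fin n, t ≤ i + 1 → Xv K n i ∈ Iideal K n t := fun i hi ↦
    Ideal.subset_span (Or.inl (Or.inl ⟨i, hi, Or.inl rfl⟩))
  have hy : ∀ i : Fin n, t ≤ i + 1 → Yv K n i ∈ Iideal K n t := fun i hi ↦
    Ideal.subset_span (Or.inl (Or.inl ⟨i, hi, Or.inr rfl⟩))
  have hxz : ∀ i j : Fin n, i < j → (j : ℕ) + 1 < t - 1 →
      Xv K n i * Zv K n j - Xv K n j * Zv K n i ∈ Iideal K n t := fun i j hij hj ↦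
    Ideal.subset_span (Or.inr ⟨i, j, hij, hj, Or.inl rfl⟩)
  have hyz : ∀ i j : Fin n, i < j → (j : ℕ) + 1 < t - 1 →
      Yv K n i * Zv K n j - Yv K n j * Zv K n i ∈ Iideal K n t := fun i j hij hj ↦
    Ideal.subset_span (Or.inr ⟨i, j, hij, hj, Or.inr rfl⟩)
  have mul_mem_of_le_or_lt : ∀ (k : Fin n) {g v : MvPolynomial (Fin n × Fin 3) K},
      (t ≤ k + 1 → v ∈ Iideal K n t) → ((k : ℕ) + 1 < t → g ∈ Iideal K n t) →
      g * v ∈ Iideal K n t := fun k _ _ hv hg ↦ by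
    by_cases hk : t ≤ (k : ℕ) + 1
    · exact Ideal.mul_mem_left _ _ (hv hk)
    · exact Ideal.mul_mem_right _ _ (hg (by omega))
  rw [Lideal, Ideal.span_le]
  rintro p (((⟨i, j, hij, rfl⟩ | ⟨i, j, k, hij, hjk, rfl⟩) | ⟨i, j, k, hij, hjk, rfl⟩) |
    ⟨i, j, k, hij, hjk, rfl⟩) <;> rw [SetLike.mem_coe]
  · by_cases hj : (j : ℕ) + 1 < t
    · exact Ideal.subset_span (Or.inl (Or.inr ⟨i, j, hij, hj, rfl⟩))
    · exact sub_mem (Ideal.mul_mem_left _ _ (hy j (by omega)))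
        (Ideal.mul_mem_right _ _ (hx j (by omega)))
  all_goals have := Fin.lt_def.1 hjk
  · convert mul_mem_of_le_or_lt k (hx k) fun _ ↦ hxz i j hij (by omega) using 1; ring
  · convert mul_mem_of_le_or_lt k (hy k) fun _ ↦ hyz i j hij (by omega) using 1; ring
  · convert mul_mem_of_le_or_lt k (hx k) fun _ ↦ hyz i j hij (by omega) using 1; ring

lemma coeffSumOn_eq_zero_of_mem_Iideal {t : ℕ} {s : Set (Exponent n)}
    (hs : ∀ e ∈ s, ∀ i : Fin n, t ≤ i + 1 → xyDeg e i = 0)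
    (hmove : ∀ a b, IMove t a b → (a ∈ s ↔ b ∈ s)) {f : MvPolynomial (Fin n × Fin 3) K}
    (hf : f ∈ Iideal K n t) : coeffSumOn s f = 0 := by
  classical
  have hbinomial : ∀ a b, IMove t a b → coeffSumOn s (monomial a (1 : K) - monomial b 1) = 0 :=
    fun a b h ↦ by
      rw [map_sub, coeffSumOn_monomial, coeffSumOn_monomial, if_congr (hmove a b h) rfl rfl,
        sub_self]
  refine coeffSumOn_eq_zero_of_mem_span ?_ hf
  rintro g ((⟨i, hi, rfl | rfl⟩ | ⟨i, j, hij, hj, rfl⟩) | ⟨i, j, hij, hj, rfl | rfl⟩) u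
  · rw [← monomial_add_expX, coeffSumOn_monomial, if_neg fun h ↦ by simpa using hs _ h i hi]
  · rw [← monomial_add_expY, coeffSumOn_monomial, if_neg fun h ↦ by simpa using hs _ h i hi]
  · simpa only [mul_sub, ← mul_assoc, ← monomial_add_expX, ← monomial_add_expY]
      using hbinomial _ _ (.xy u hij hj)
  · simpa only [mul_sub, ← mul_assoc, ← monomial_add_expX, ← monomial_add_expZ]
      using hbinomial _ _ (.xz u hij hj)
  · simpa only [mul_sub, ← mul_assoc, ← monomial_add_expY, ← monomial_add_expZ]
      using hbinomial _ _ (.yz u hij hj)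

end Ideals

/-- `L_n = I_3 ∩ I_4 ∩ ⋯ ∩ I_{n+1}`. -/
theorem stmt4 (hn : 3 ≤ n) :
    Lideal K n = ⨅ t ∈ Finset.Icc 3 (n + 1), Iideal K n t := by
  refine le_antisymm (le_iInf₂ fun t _ ↦ Lideal_le_Iideal t) fun f hf ↦ ?_
  refine mem_of_coeffSumOn_eqvGen_eq_zero (r := LMove) (fun _ _ h ↦ h.monomial_sub_mem_Lideal)
    fun d ↦ ?_
  obtain ⟨c, hc1, hd, hc⟩ := exists_xyBoundedBy_column hn d
  have hft : f ∈ Iideal K n (c + 2) :=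
    Ideal.mem_iInf.1 (Ideal.mem_iInf.1 hf (c + 2)) (Finset.mem_Icc.2 ⟨by omega, by omega⟩)
  refine coeffSumOn_eq_zero_of_mem_Iideal (fun e he i hi ↦ ?_)
    (fun a b h ↦ eqvGen_lMove_iff_of_iMove hd hc h) hft
  have hci : c < i := Fin.lt_def.2 (by omega)
  exact (xyDeg_eq_of_eqvGen_lMove hd he hci.le).trans (hd i hci)

end
end

section
/- Let 1 ≤ i < j < k ≤ n and let A(ε)_{ijk} be the 9×7 matrix over K(ε)[x,y,z] with rows (1,1,0,0,x_i,0,0), (1,0,1,0,y_i,0,0), (ε^{n-i},0,0,1,z_i,0,0), (1,1,0,0,0,x_j,0), (1,0,1,0,0,y_j,0), (ε^{n-j},0,0,1,0,z_j,0), (1,1,0,0,0,0,x_k), (1,0,1,0,0,0,y_k), (ε^{n-k},0,0,1,0,0,z_k). Then the 7×7 minor obtained by deleting the rows containing y_j and y_k equals, up to sign, (ε^{n-k}-ε^{n-i}) x_i z_j x_k + (ε^{n-j}-ε^{n-k}) z_i x_j x_k + (ε^{n-i}-ε^{n-j}) x_i x_j z_k. -/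
open MvPolynomial

noncomputable section
section AuxDet
variable {R : Type*} [CommRing R]

set_option maxHeartbeats 2000000 in
set_option maxRecDepth 8000 in
lemma det6a (a b c x0 y0 z0 x1 z1 : R) :
    (Matrix.of
      ![![1,1,0,0,x0,0],![1,0,1,0,y0,0],![a,0,0,1,z0,0],
        ![1,1,0,0,0,x1],![b,0,0,1,0,z1],![c,0,0,1,0,0]]).det
      = (b-c)*(x1*z0)+(c-a)*(x0*z1) := by
  simp only [Matrix.det_succ_row_zero, Fin.sum_univ_succ, Matrix.det_fin_zero,
    Matrix.submatrix_apply, Matrix.submatrix_submatrix, Function.comp_apply,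
    Fin.zero_succAbove, Fin.succ_succAbove_zero, Fin.succ_succAbove_succ,
    Matrix.of_apply, Matrix.cons_val_zero, Matrix.cons_val_succ,
    Fin.val_zero, Fin.val_succ, pow_succ, pow_zero,
    Finset.univ_unique, Finset.sum_singleton, Fin.default_eq_zero,
    Matrix.det_unique, one_mul, neg_mul, mul_one, zero_mul, mul_zero, neg_zero,
    add_zero, zero_add, neg_neg]
  ring

set_option maxHeartbeats 2000000 in
set_option maxRecDepth 8000 in
lemma det6b (a b x0 y0 z0 x1 z1 : R) :
    (Matrix.of
      ![![1,1,0,0,x0,0],![1,0,1,0,y0,0],![a,0,0,1,z0,0],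
        ![1,1,0,0,0,x1],![b,0,0,1,0,z1],![1,1,0,0,0,0]]).det
      = (b-a)*(x0*x1) := by
  simp only [Matrix.det_succ_row_zero, Fin.sum_univ_succ, Matrix.det_fin_zero,
    Matrix.submatrix_apply, Matrix.submatrix_submatrix, Function.comp_apply,
    Fin.zero_succAbove, Fin.succ_succAbove_zero, Fin.succ_succAbove_succ,
    Matrix.of_apply, Matrix.cons_val_zero, Matrix.cons_val_succ,
    Fin.val_zero, Fin.val_succ, pow_succ, pow_zero,
    Finset.univ_unique, Finset.sum_singleton, Fin.default_eq_zero,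
    Matrix.det_unique, one_mul, neg_mul, mul_one, zero_mul, mul_zero, neg_zero,
    add_zero, zero_add, neg_neg]
  ring

set_option maxHeartbeats 1000000 in
lemma det7 (a b c x0 y0 z0 x1 z1 x2 z2 : R) :
    (Matrix.of
      ![![1,1,0,0,x0,0,0],![1,0,1,0,y0,0,0],![a,0,0,1,z0,0,0],
        ![1,1,0,0,0,x1,0],![b,0,0,1,0,z1,0],![1,1,0,0,0,0,x2],
        ![c,0,0,1,0,0,z2]]).det
      = (c-b)*(z0*x1*x2)+(a-c)*(x0*z1*x2)+(b-a)*(x0*x1*z2) := by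
  have h5 : (Matrix.of
      ![![1,1,0,0,x0,0,0],![1,0,1,0,y0,0,0],![a,0,0,1,z0,0,0],
        ![1,1,0,0,0,x1,0],![b,0,0,1,0,z1,0],![1,1,0,0,0,0,x2],
        ![c,0,0,1,0,0,z2]]).submatrix (Fin.succAbove 5) (Fin.succAbove 6)
      = Matrix.of
      ![![1,1,0,0,x0,0],![1,0,1,0,y0,0],![a,0,0,1,z0,0],
        ![1,1,0,0,0,x1],![b,0,0,1,0,z1],![c,0,0,1,0,0]] := by
    ext i j
    fin_cases i <;> fin_cases j <;> rfl
  have h6 : (Matrix.of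
      ![![1,1,0,0,x0,0,0],![1,0,1,0,y0,0,0],![a,0,0,1,z0,0,0],
        ![1,1,0,0,0,x1,0],![b,0,0,1,0,z1,0],![1,1,0,0,0,0,x2],
        ![c,0,0,1,0,0,z2]]).submatrix (Fin.succAbove 6) (Fin.succAbove 6)
      = Matrix.of
      ![![1,1,0,0,x0,0],![1,0,1,0,y0,0],![a,0,0,1,z0,0],
        ![1,1,0,0,0,x1],![b,0,0,1,0,z1],![1,1,0,0,0,0]] := by
    ext i j
    fin_cases i <;> fin_cases j <;> rfl
  rw [Matrix.det_succ_column _ 6, Fin.sum_univ_seven]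
  simp only [show (Matrix.of ![![1,1,0,0,x0,0,0],![1,0,1,0,y0,0,0],![a,0,0,1,z0,0,0],
        ![1,1,0,0,0,x1,0],![b,0,0,1,0,z1,0],![1,1,0,0,0,0,x2],
        ![c,0,0,1,0,0,z2]] : Matrix (Fin 7) (Fin 7) R) 0 6 = 0 from rfl,
    show (Matrix.of ![![1,1,0,0,x0,0,0],![1,0,1,0,y0,0,0],![a,0,0,1,z0,0,0],
        ![1,1,0,0,0,x1,0],![b,0,0,1,0,z1,0],![1,1,0,0,0,0,x2],
        ![c,0,0,1,0,0,z2]] : Matrix (Fin 7) (Fin 7) R) 1 6 = 0 from rfl,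
    show (Matrix.of ![![1,1,0,0,x0,0,0],![1,0,1,0,y0,0,0],![a,0,0,1,z0,0,0],
        ![1,1,0,0,0,x1,0],![b,0,0,1,0,z1,0],![1,1,0,0,0,0,x2],
        ![c,0,0,1,0,0,z2]] : Matrix (Fin 7) (Fin 7) R) 2 6 = 0 from rfl,
    show (Matrix.of ![![1,1,0,0,x0,0,0],![1,0,1,0,y0,0,0],![a,0,0,1,z0,0,0],
        ![1,1,0,0,0,x1,0],![b,0,0,1,0,z1,0],![1,1,0,0,0,0,x2],
        ![c,0,0,1,0,0,z2]] : Matrix (Fin 7) (Fin 7) R) 3 6 = 0 from rfl,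
    show (Matrix.of ![![1,1,0,0,x0,0,0],![1,0,1,0,y0,0,0],![a,0,0,1,z0,0,0],
        ![1,1,0,0,0,x1,0],![b,0,0,1,0,z1,0],![1,1,0,0,0,0,x2],
        ![c,0,0,1,0,0,z2]] : Matrix (Fin 7) (Fin 7) R) 4 6 = 0 from rfl,
    show (Matrix.of ![![1,1,0,0,x0,0,0],![1,0,1,0,y0,0,0],![a,0,0,1,z0,0,0],
        ![1,1,0,0,0,x1,0],![b,0,0,1,0,z1,0],![1,1,0,0,0,0,x2],
        ![c,0,0,1,0,0,z2]] : Matrix (Fin 7) (Fin 7) R) 5 6 = x2 from rfl,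
    show (Matrix.of ![![1,1,0,0,x0,0,0],![1,0,1,0,y0,0,0],![a,0,0,1,z0,0,0],
        ![1,1,0,0,0,x1,0],![b,0,0,1,0,z1,0],![1,1,0,0,0,0,x2],
        ![c,0,0,1,0,0,z2]] : Matrix (Fin 7) (Fin 7) R) 6 6 = z2 from rfl,
    show ((6:Fin 7):ℕ) = 6 from rfl, show ((5:Fin 7):ℕ) = 5 from rfl,
    show ((0:Fin 7):ℕ) = 0 from rfl,
    show ((1:Fin 7):ℕ) = 1 from rfl, show ((2:Fin 7):ℕ) = 2 from rfl,
    show ((3:Fin 7):ℕ) = 3 from rfl, show ((4:Fin 7):ℕ) = 4 from rfl,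
    zero_mul, mul_zero, add_zero, zero_add]
  norm_num [h5, h6, det6a, det6b]
  ring
end AuxDet


/-- For the collinear configuration `A(ε)`, the 7×7 minor of the 9×7 matrix
`A(ε)_{ijk}` obtained by deleting the rows containing `y_j` and `y_k` equals, up to
sign, `(ε^{n-k}-ε^{n-i}) x_i z_j x_k + (ε^{n-j}-ε^{n-k}) z_i x_j x_k
+ (ε^{n-i}-ε^{n-j}) x_i x_j z_k`.  The variable `X (0, r)` is coordinate `r`
(`x`,`y`,`z` for `r = 0,1,2`) of `p_i`, `X (1, r)` of `p_j`, `X (2, r)` of `p_k`. -/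
theorem stmt12 (K : Type*) [Field K] (n i j k : ℕ) (hn : 3 ≤ n)
    (hi : 1 ≤ i) (hij : i < j) (hjk : j < k) (hk : k ≤ n) :
    letI F := RatFunc K
    letI ε : F := RatFunc.X
    letI T : MvPolynomial (Fin 3 × Fin 3) F :=
      C (ε ^ (n - k) - ε ^ (n - i)) * (X (0, 0) * X (1, 2) * X (2, 0)) +
      C (ε ^ (n - j) - ε ^ (n - k)) * (X (0, 2) * X (1, 0) * X (2, 0)) +
      C (ε ^ (n - i) - ε ^ (n - j)) * (X (0, 0) * X (1, 0) * X (2, 2))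
    ((Matrix.of
      ![![C 1, C 1, C 0, C 0, (X (0, 0) : MvPolynomial (Fin 3 × Fin 3) F), 0, 0],
        ![C 1, C 0, C 1, C 0, X (0, 1), 0, 0],
        ![C (ε ^ (n - i)), C 0, C 0, C 1, X (0, 2), 0, 0],
        ![C 1, C 1, C 0, C 0, 0, X (1, 0), 0],
        ![C (ε ^ (n - j)), C 0, C 0, C 1, 0, X (1, 2), 0],
        ![C 1, C 1, C 0, C 0, 0, 0, X (2, 0)],
        ![C (ε ^ (n - k)), C 0, C 0, C 1, 0, 0, X (2, 2)]]).det = T ∨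
     (Matrix.of
      ![![C 1, C 1, C 0, C 0, (X (0, 0) : MvPolynomial (Fin 3 × Fin 3) F), 0, 0],
        ![C 1, C 0, C 1, C 0, X (0, 1), 0, 0],
        ![C (ε ^ (n - i)), C 0, C 0, C 1, X (0, 2), 0, 0],
        ![C 1, C 1, C 0, C 0, 0, X (1, 0), 0],
        ![C (ε ^ (n - j)), C 0, C 0, C 1, 0, X (1, 2), 0],
        ![C 1, C 1, C 0, C 0, 0, 0, X (2, 0)],
        ![C (ε ^ (n - k)), C 0, C 0, C 1, 0, 0, X (2, 2)]]).det = -T) := by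
  right
  simp only [map_one, map_zero]
  rw [det7]
  simp only [map_sub]
  ring

end
end

section
/- For n ≥ 2 and each 1 < j < n, the assignment sending the generator x_i z_j x_k of N_n to x_i x_j x_k and the generator y_i z_j x_k to y_i x_j x_k (for all 1 ≤ i < j < k ≤ n), and all other minimal generators of N_n to 0, extends to a well-defined degree-zero K[x,y,z]-module homomorphism N_n → K[x,y,z]/N_n. -/
open MvPolynomial

noncomputable section

variable (K : Type*) [Field K] (n : ℕ)

/-- The monomial ideal `N_n = ⟨x_i y_k : i<k⟩ + ⟨x_i z_j x_k, y_i z_j y_k, y_i z_j x_k : i<j<k⟩`. -/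
def Nideal : Ideal (MvPolynomial (Fin n × Fin 3) K) :=
  Ideal.span ({p | ∃ i k : Fin n, i < k ∧ p = Xv K n i * Yv K n k} ∪
    {p | ∃ i j k : Fin n, i < j ∧ j < k ∧
      (p = Xv K n i * Zv K n j * Xv K n k ∨
       p = Yv K n i * Zv K n j * Yv K n k ∨
       p = Yv K n i * Zv K n j * Xv K n k)})

namespace Stmt14Aux

set_option linter.unusedSectionVars false

variable {σ : Type*} [DecidableEq σ] {R' : Type*} [CommRing R']

theorem XX (a b : σ) : (X a * X b : MvPolynomial σ R')
    = monomial (Finsupp.single a 1 + Finsupp.single b 1) 1 := by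
  rw [show (X a : MvPolynomial σ R') = monomial (Finsupp.single a 1) 1 from rfl,
    show (X b : MvPolynomial σ R') = monomial (Finsupp.single b 1) 1 from rfl,
    monomial_mul, one_mul]

theorem XXX (a b c : σ) : (X a * X b * X c : MvPolynomial σ R')
    = monomial (Finsupp.single a 1 + Finsupp.single b 1 + Finsupp.single c 1) 1 := by
  rw [XX, show (X c : MvPolynomial σ R') = monomial (Finsupp.single c 1) 1 from rfl,
    monomial_mul, one_mul]

theorem divA (v : σ) (m : σ →₀ ℕ) (hm : m v = 0) (c : R') (r : MvPolynomial σ R') :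
    (r * monomial m c).divMonomial (Finsupp.single v 1)
      = (r.divMonomial (Finsupp.single v 1)) * monomial m c := by
  classical
  ext ψ
  rw [coeff_divMonomial, coeff_mul_monomial', coeff_mul_monomial']
  have hle : (m ≤ Finsupp.single v 1 + ψ) ↔ m ≤ ψ := by
    simp only [Finsupp.le_def, Finsupp.add_apply, Finsupp.single_apply]
    constructor
    · intro h a
      rcases eq_or_ne v a with rfl | hav
      · simp [hm]
      · have := h a
        simpa [hav] using this
    · intro h a
      have := h a
      rcases eq_or_ne v a with rfl | hav
      · simp only [if_pos rfl]; omega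
      · simpa [hav] using this
  simp only [hle]
  by_cases h : m ≤ ψ
  · rw [if_pos h, if_pos h, coeff_divMonomial]
    congr 2
    ext a
    have := Finsupp.le_def.mp h a
    simp only [Finsupp.add_apply, Finsupp.tsub_apply]
    omega
  · rw [if_neg h, if_neg h]

theorem oneDivSingle (v : σ) : (1 : MvPolynomial σ R').divMonomial (Finsupp.single v 1) = 0 := by
  ext ψ
  rw [coeff_divMonomial, coeff_zero, coeff_one, if_neg]
  intro h
  have := congrArg (fun f => f v) h
  simp at this
  omega

theorem divA0 (v : σ) (m : σ →₀ ℕ) (hm : m v = 0) (c : R') :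
    (monomial m c : MvPolynomial σ R').divMonomial (Finsupp.single v 1) = 0 := by
  have := divA v m hm c (1 : MvPolynomial σ R')
  rwa [one_mul, oneDivSingle, zero_mul] at this

end Stmt14Aux

theorem NidealKey (j : Fin n) (f : MvPolynomial (Fin n × Fin 3) K) (hf : f ∈ Nideal K n) :
    ∀ r : MvPolynomial (Fin n × Fin 3) K,
      X (j, (0 : Fin 3)) * ((r * f).divMonomial (Finsupp.single (j, (2 : Fin 3)) 1))
        - r * (X (j, (0 : Fin 3)) * (f.divMonomial (Finsupp.single (j, (2 : Fin 3)) 1)))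
        ∈ Nideal K n := by
  classical
  have typeA : ∀ g : MvPolynomial (Fin n × Fin 3) K, g ∈ Nideal K n →
      ∀ m : Fin n × Fin 3 →₀ ℕ, g = monomial m 1 → m (j, (2 : Fin 3)) = 0 →
      ∀ r : MvPolynomial (Fin n × Fin 3) K,
        X (j, (0 : Fin 3)) * ((r * g).divMonomial (Finsupp.single (j, (2 : Fin 3)) 1))
          - r * (X (j, (0 : Fin 3)) * (g.divMonomial (Finsupp.single (j, (2 : Fin 3)) 1)))
          ∈ Nideal K n := by
    rintro g hgmem m rfl hm r
    rw [Stmt14Aux.divA _ m hm, Stmt14Aux.divA0 _ m hm, mul_zero, mul_zero, sub_zero,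
      ← mul_assoc]
    exact Ideal.mul_mem_left _ _ hgmem
  have typeB : ∀ g q : MvPolynomial (Fin n × Fin 3) K, g = q * X (j, (2 : Fin 3)) →
      ∀ r : MvPolynomial (Fin n × Fin 3) K,
        X (j, (0 : Fin 3)) * ((r * g).divMonomial (Finsupp.single (j, (2 : Fin 3)) 1))
          - r * (X (j, (0 : Fin 3)) * (g.divMonomial (Finsupp.single (j, (2 : Fin 3)) 1)))
          ∈ Nideal K n := by
    rintro g q rfl r
    rw [show r * (q * X (j, (2 : Fin 3))) = (r * q) * X (j, (2 : Fin 3)) by ring,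
      mul_X_divMonomial, mul_X_divMonomial,
      show X (j, (0 : Fin 3)) * (r * q) - r * (X (j, (0 : Fin 3)) * q) = 0 by ring]
    exact (Nideal K n).zero_mem
  induction hf using Submodule.span_induction with
  | mem g hg =>
    simp only [Set.mem_union, Set.mem_setOf_eq] at hg
    rcases hg with ⟨i, k, hik, rfl⟩ | ⟨i, j', k, hij, hjk, (rfl | rfl | rfl)⟩
    · exact typeA _ (Ideal.subset_span (Or.inl ⟨i, k, hik, rfl⟩)) _
        (Stmt14Aux.XX (i, (0 : Fin 3)) (k, (1 : Fin 3)))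
        (by simp [Finsupp.single_apply])
    · by_cases hj' : j' = j
      · subst hj'
        exact typeB _ (X (i, (0 : Fin 3)) * X (k, (0 : Fin 3)))
          (by show (X (i, (0:Fin 3)) * X (j', (2:Fin 3)) * X (k, (0:Fin 3)) :
              MvPolynomial (Fin n × Fin 3) K) = _; ring)
      · exact typeA _ (Ideal.subset_span (Or.inr ⟨i, j', k, hij, hjk, Or.inl rfl⟩)) _
          (Stmt14Aux.XXX (i, (0 : Fin 3)) (j', (2 : Fin 3)) (k, (0 : Fin 3)))
          (by simp [Finsupp.single_apply, hj'])
    · by_cases hj' : j' = j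
      · subst hj'
        exact typeB _ (X (i, (1 : Fin 3)) * X (k, (1 : Fin 3)))
          (by show (X (i, (1:Fin 3)) * X (j', (2:Fin 3)) * X (k, (1:Fin 3)) :
              MvPolynomial (Fin n × Fin 3) K) = _; ring)
      · exact typeA _ (Ideal.subset_span (Or.inr ⟨i, j', k, hij, hjk, Or.inr (Or.inl rfl)⟩)) _
          (Stmt14Aux.XXX (i, (1 : Fin 3)) (j', (2 : Fin 3)) (k, (1 : Fin 3)))
          (by simp [Finsupp.single_apply, hj'])
    · by_cases hj' : j' = j
      · subst hj'
        exact typeB _ (X (i, (1 : Fin 3)) * X (k, (0 : Fin 3)))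
          (by show (X (i, (1:Fin 3)) * X (j', (2:Fin 3)) * X (k, (0:Fin 3)) :
              MvPolynomial (Fin n × Fin 3) K) = _; ring)
      · exact typeA _ (Ideal.subset_span (Or.inr ⟨i, j', k, hij, hjk, Or.inr (Or.inr rfl)⟩)) _
          (Stmt14Aux.XXX (i, (1 : Fin 3)) (j', (2 : Fin 3)) (k, (0 : Fin 3)))
          (by simp [Finsupp.single_apply, hj'])
  | zero =>
    intro r
    simp only [mul_zero, zero_divMonomial, sub_zero]
    exact (Nideal K n).zero_mem
  | add x y hx hy px py =>
    intro r
    have := (Nideal K n).add_mem (px r) (py r)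
    convert this using 1
    rw [mul_add, add_divMonomial, add_divMonomial]
    ring
  | smul s x hx px =>
    intro r
    rw [smul_eq_mul]
    have := (Nideal K n).sub_mem (px (r * s)) (Ideal.mul_mem_left _ r (px s))
    convert this using 1
    rw [show r * (s * x) = r * s * x by ring]
    ring

/-- The Class II homomorphism `ρ_j` is well defined: for each `1 < j < n` (`j` is
0-based here, so `0 < j` and `j + 1 < n`) there is an `R`-module homomorphism
`N_n → R/N_n` sending `x_i z_j x_k ↦ x_i x_j x_k` and `y_i z_j x_k ↦ y_i x_j x_k`
for all `i < j < k`, and all other minimal generators of `N_n` to `0`. -/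
theorem stmt14 (hn : 2 ≤ n) (j : Fin n) (hj0 : 0 < (j : ℕ)) (hj1 : (j : ℕ) + 1 < n) :
    ∃ φ : (Nideal K n) →ₗ[MvPolynomial (Fin n × Fin 3) K]
        (MvPolynomial (Fin n × Fin 3) K ⧸ Nideal K n),
      (∀ (i k : Fin n), i < k → ∀ h : Xv K n i * Yv K n k ∈ Nideal K n,
        φ ⟨_, h⟩ = 0) ∧
      (∀ (i j' k : Fin n), i < j' → j' < k →
        ∀ h : Xv K n i * Zv K n j' * Xv K n k ∈ Nideal K n,
        φ ⟨_, h⟩ = if j' = j then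
            Ideal.Quotient.mk (Nideal K n) (Xv K n i * Xv K n j' * Xv K n k) else 0) ∧
      (∀ (i j' k : Fin n), i < j' → j' < k →
        ∀ h : Yv K n i * Zv K n j' * Xv K n k ∈ Nideal K n,
        φ ⟨_, h⟩ = if j' = j then
            Ideal.Quotient.mk (Nideal K n) (Yv K n i * Xv K n j' * Xv K n k) else 0) ∧
      (∀ (i j' k : Fin n), i < j' → j' < k →
        ∀ h : Yv K n i * Zv K n j' * Yv K n k ∈ Nideal K n,
        φ ⟨_, h⟩ = 0) := by
  classical
  refine ⟨{ toFun := fun f => Ideal.Quotient.mk (Nideal K n)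
              (X (j, (0 : Fin 3)) * (f.1.divMonomial (Finsupp.single (j, (2 : Fin 3)) 1))),
            map_add' := ?_, map_smul' := ?_ }, ?_, ?_, ?_, ?_⟩
  · intro f g
    simp only [Submodule.coe_add]
    rw [add_divMonomial, mul_add, RingHom.map_add]
  · intro r f
    simp only [SetLike.val_smul, smul_eq_mul, RingHom.id_apply]
    show Submodule.Quotient.mk (X (j, (0 : Fin 3)) *
          ((r * (f : MvPolynomial (Fin n × Fin 3) K)).divMonomial
            (Finsupp.single (j, (2 : Fin 3)) 1)))
        = r • Submodule.Quotient.mk (X (j, (0 : Fin 3)) *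
          (((f : MvPolynomial (Fin n × Fin 3) K)).divMonomial
            (Finsupp.single (j, (2 : Fin 3)) 1)))
    rw [← Submodule.Quotient.mk_smul, Submodule.Quotient.eq, smul_eq_mul]
    exact NidealKey K n j f.1 f.2 r
  · intro i k hik h
    show Ideal.Quotient.mk (Nideal K n)
      (X (j, (0 : Fin 3)) * ((Xv K n i * Yv K n k).divMonomial
        (Finsupp.single (j, (2 : Fin 3)) 1))) = 0
    rw [show Xv K n i * Yv K n k
        = monomial (Finsupp.single ((i, 0) : Fin n × Fin 3) 1
            + Finsupp.single ((k, 1) : Fin n × Fin 3) 1) (1 : K) from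
        Stmt14Aux.XX (i, (0 : Fin 3)) (k, (1 : Fin 3)),
      Stmt14Aux.divA0 _ _ (by simp [Finsupp.single_apply]) _, mul_zero, map_zero]
  · intro i j' k hij hjk h
    by_cases hj' : j' = j
    · subst hj'
      rw [if_pos rfl]
      show Ideal.Quotient.mk (Nideal K n)
        (X (j', (0 : Fin 3)) * ((Xv K n i * Zv K n j' * Xv K n k).divMonomial
          (Finsupp.single (j', (2 : Fin 3)) 1))) = _
      have e1 : Xv K n i * Zv K n j' * Xv K n k
          = (X ((i, 0) : Fin n × Fin 3) * X ((k, 0) : Fin n × Fin 3))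
              * X ((j', 2) : Fin n × Fin 3) := by
        show (X (i, (0:Fin 3)) * X (j', (2:Fin 3)) * X (k, (0:Fin 3)) :
          MvPolynomial (Fin n × Fin 3) K) = _
        ring
      rw [e1, mul_X_divMonomial]
      exact congrArg (Ideal.Quotient.mk (Nideal K n)) (by
        show (X (j', (0:Fin 3)) * (X (i, (0:Fin 3)) * X (k, (0:Fin 3))) :
          MvPolynomial (Fin n × Fin 3) K)
          = X (i, (0:Fin 3)) * X (j', (0:Fin 3)) * X (k, (0:Fin 3)); ring)
    · rw [if_neg hj']
      show Ideal.Quotient.mk (Nideal K n)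
        (X (j, (0 : Fin 3)) * ((Xv K n i * Zv K n j' * Xv K n k).divMonomial
          (Finsupp.single (j, (2 : Fin 3)) 1))) = 0
      rw [show Xv K n i * Zv K n j' * Xv K n k
          = monomial (Finsupp.single ((i, 0) : Fin n × Fin 3) 1
              + Finsupp.single ((j', 2) : Fin n × Fin 3) 1
              + Finsupp.single ((k, 0) : Fin n × Fin 3) 1) (1 : K) from
          Stmt14Aux.XXX (i, (0 : Fin 3)) (j', (2 : Fin 3)) (k, (0 : Fin 3)),
        Stmt14Aux.divA0 _ _ (by simp [Finsupp.single_apply, hj']) _, mul_zero, map_zero]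
  · intro i j' k hij hjk h
    by_cases hj' : j' = j
    · subst hj'
      rw [if_pos rfl]
      show Ideal.Quotient.mk (Nideal K n)
        (X (j', (0 : Fin 3)) * ((Yv K n i * Zv K n j' * Xv K n k).divMonomial
          (Finsupp.single (j', (2 : Fin 3)) 1))) = _
      have e1 : Yv K n i * Zv K n j' * Xv K n k
          = (X ((i, 1) : Fin n × Fin 3) * X ((k, 0) : Fin n × Fin 3))
              * X ((j', 2) : Fin n × Fin 3) := by
        show (X (i, (1:Fin 3)) * X (j', (2:Fin 3)) * X (k, (0:Fin 3)) :
          MvPolynomial (Fin n × Fin 3) K) = _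
        ring
      rw [e1, mul_X_divMonomial]
      exact congrArg (Ideal.Quotient.mk (Nideal K n)) (by
        show (X (j', (0:Fin 3)) * (X (i, (1:Fin 3)) * X (k, (0:Fin 3))) :
          MvPolynomial (Fin n × Fin 3) K)
          = X (i, (1:Fin 3)) * X (j', (0:Fin 3)) * X (k, (0:Fin 3)); ring)
    · rw [if_neg hj']
      show Ideal.Quotient.mk (Nideal K n)
        (X (j, (0 : Fin 3)) * ((Yv K n i * Zv K n j' * Xv K n k).divMonomial
          (Finsupp.single (j, (2 : Fin 3)) 1))) = 0
      rw [show Yv K n i * Zv K n j' * Xv K n k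
          = monomial (Finsupp.single ((i, 1) : Fin n × Fin 3) 1
              + Finsupp.single ((j', 2) : Fin n × Fin 3) 1
              + Finsupp.single ((k, 0) : Fin n × Fin 3) 1) (1 : K) from
          Stmt14Aux.XXX (i, (1 : Fin 3)) (j', (2 : Fin 3)) (k, (0 : Fin 3)),
        Stmt14Aux.divA0 _ _ (by simp [Finsupp.single_apply, hj']) _, mul_zero, map_zero]
  · intro i j' k hij hjk h
    by_cases hj' : j' = j
    · subst hj'
      show Ideal.Quotient.mk (Nideal K n)
        (X (j', (0 : Fin 3)) * ((Yv K n i * Zv K n j' * Yv K n k).divMonomial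
          (Finsupp.single (j', (2 : Fin 3)) 1))) = 0
      have e1 : Yv K n i * Zv K n j' * Yv K n k
          = (X ((i, 1) : Fin n × Fin 3) * X ((k, 1) : Fin n × Fin 3))
              * X ((j', 2) : Fin n × Fin 3) := by
        show (X (i, (1:Fin 3)) * X (j', (2:Fin 3)) * X (k, (1:Fin 3)) :
          MvPolynomial (Fin n × Fin 3) K) = _
        ring
      rw [e1, mul_X_divMonomial, Ideal.Quotient.eq_zero_iff_mem]
      have hmem : Xv K n j' * Yv K n k ∈ Nideal K n :=
        Ideal.subset_span (Or.inl ⟨j', k, hjk, rfl⟩)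
      have := Ideal.mul_mem_left (Nideal K n) (X ((i, 1) : Fin n × Fin 3)) hmem
      convert this using 1
      show (X (j', (0:Fin 3)) * (X (i, (1:Fin 3)) * X (k, (1:Fin 3))) :
        MvPolynomial (Fin n × Fin 3) K)
        = X (i, (1:Fin 3)) * (X (j', (0:Fin 3)) * X (k, (1:Fin 3)))
      ring
    · show Ideal.Quotient.mk (Nideal K n)
        (X (j, (0 : Fin 3)) * ((Yv K n i * Zv K n j' * Yv K n k).divMonomial
          (Finsupp.single (j, (2 : Fin 3)) 1))) = 0
      rw [show Yv K n i * Zv K n j' * Yv K n k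
          = monomial (Finsupp.single ((i, 1) : Fin n × Fin 3) 1
              + Finsupp.single ((j', 2) : Fin n × Fin 3) 1
              + Finsupp.single ((k, 1) : Fin n × Fin 3) 1) (1 : K) from
          Stmt14Aux.XXX (i, (1 : Fin 3)) (j', (2 : Fin 3)) (k, (1 : Fin 3)),
        Stmt14Aux.divA0 _ _ (by simp [Finsupp.single_apply, hj']) _, mul_zero, map_zero]

end
end

section
/- For two cameras, the fundamental matrix F built from the camera matrices A_1, A_2 ∈ K^{3×4} by F_{rs} = (-1)^{r+s} det of the 4×4 matrix stacking the two rows of A_1 other than row s and the two rows of A_2 other than row r, satisfies rank(F) ≤ 2. -/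
open Matrix

private lemma det_fin_four' {R : Type*} [CommRing R] (A : Matrix (Fin 4) (Fin 4) R) :
    A.det =
      A 0 0 * (A 1 1 * (A 2 2 * A 3 3 - A 2 3 * A 3 2)
             - A 1 2 * (A 2 1 * A 3 3 - A 2 3 * A 3 1)
             + A 1 3 * (A 2 1 * A 3 2 - A 2 2 * A 3 1))
    - A 0 1 * (A 1 0 * (A 2 2 * A 3 3 - A 2 3 * A 3 2)
             - A 1 2 * (A 2 0 * A 3 3 - A 2 3 * A 3 0)
             + A 1 3 * (A 2 0 * A 3 2 - A 2 2 * A 3 0))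
    + A 0 2 * (A 1 0 * (A 2 1 * A 3 3 - A 2 3 * A 3 1)
             - A 1 1 * (A 2 0 * A 3 3 - A 2 3 * A 3 0)
             + A 1 3 * (A 2 0 * A 3 1 - A 2 1 * A 3 0))
    - A 0 3 * (A 1 0 * (A 2 1 * A 3 2 - A 2 2 * A 3 1)
             - A 1 1 * (A 2 0 * A 3 2 - A 2 2 * A 3 0)
             + A 1 2 * (A 2 0 * A 3 1 - A 2 1 * A 3 0)) := by
  rw [Matrix.det_succ_row_zero]
  simp [Fin.sum_univ_succ, Matrix.det_fin_three, Matrix.submatrix, Fin.succAbove]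
  norm_num [Fin.lt_def, show (Fin.succ 2 : Fin 4) = 3 from rfl, show (Fin.castSucc 2 : Fin 4) = 2 from rfl, show ((3 : Fin 4) : ℕ) = 3 from rfl, show ((2 : Fin 4) : ℕ) = 2 from rfl]
  ring

private lemma key_s16 {K : Type*} [Field K] (a b c u v x : Fin 4 → K)
    (hu : ∑ j, u j * x j = 0) (hv : ∑ j, v j * x j = 0) :
    (Matrix.of ![b,c,u,v]).det * (∑ j, a j * x j)
    - (Matrix.of ![a,c,u,v]).det * (∑ j, b j * x j)
    + (Matrix.of ![a,b,u,v]).det * (∑ j, c j * x j) = 0 := by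
  have H : (Matrix.of ![b,c,u,v]).det * (∑ j, a j * x j)
      - (Matrix.of ![a,c,u,v]).det * (∑ j, b j * x j)
      + (Matrix.of ![a,b,u,v]).det * (∑ j, c j * x j)
      = (Matrix.of ![a,b,c,v]).det * (∑ j, u j * x j)
      - (Matrix.of ![a,b,c,u]).det * (∑ j, v j * x j) := by
    simp only [det_fin_four', Matrix.of_apply, Fin.sum_univ_four,
      Matrix.cons_val', Matrix.cons_val_zero, Matrix.cons_val_one, Matrix.head_cons,
      Matrix.cons_val_two, Matrix.tail_cons, Matrix.cons_val_three,
      Matrix.empty_val', Matrix.cons_val_fin_one, Matrix.head_fin_const]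
    ring
  rw [hu, hv] at H
  simpa using H

private lemma rank_le_two_of_det_eq_zero {K : Type*} [Field K] (M : Matrix (Fin 3) (Fin 3) K)
    (h : M.det = 0) : M.rank ≤ 2 := by
  obtain ⟨w, hw, hMw⟩ := (Matrix.exists_mulVec_eq_zero_iff).2 h
  have hker : w ∈ LinearMap.ker M.mulVecLin := by simpa [Matrix.mulVecLin] using hMw
  have h1 : 1 ≤ Module.finrank K (LinearMap.ker M.mulVecLin) := by
    rw [Nat.one_le_iff_ne_zero]
    intro h0
    have : LinearMap.ker M.mulVecLin = ⊥ := Submodule.finrank_eq_zero.mp h0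
    exact hw (by simpa [this] using hker)
  have := LinearMap.finrank_range_add_finrank_ker M.mulVecLin
  have h3 : Module.finrank K (Fin 3 → K) = 3 := by simp
  rw [Matrix.rank]
  omega

/-- The fundamental matrix of two cameras has rank at most 2.  Its `(r,s)` entry is
`(-1)^(r+s)` times the determinant of the 4×4 matrix formed by the two rows of `A₁`
other than row `s` followed by the two rows of `A₂` other than row `r`. -/
theorem stmt16 (K : Type*) [Field K] (A₁ A₂ : Matrix (Fin 3) (Fin 4) K) :
    (Matrix.of (fun r s : Fin 3 =>
      (-1 : K) ^ ((r : ℕ) + (s : ℕ)) *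
        (Matrix.of ![A₁ (s.succAbove 0), A₁ (s.succAbove 1),
                     A₂ (r.succAbove 0), A₂ (r.succAbove 1)]).det)).rank ≤ 2 := by
  set F : Matrix (Fin 3) (Fin 3) K := Matrix.of (fun r s : Fin 3 =>
      (-1 : K) ^ ((r : ℕ) + (s : ℕ)) *
        (Matrix.of ![A₁ (s.succAbove 0), A₁ (s.succAbove 1),
                     A₂ (r.succAbove 0), A₂ (r.succAbove 1)]).det) with hF
  -- get a nonzero vector in the kernel of A₂
  obtain ⟨c, hc, hc0⟩ : ∃ c : Fin 4 → K, A₂.mulVec c = 0 ∧ c ≠ 0 := by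
    have h1 : LinearMap.ker A₂.mulVecLin ≠ ⊥ := by
      intro hbot
      have h2 := LinearMap.finrank_range_add_finrank_ker A₂.mulVecLin
      have h3 : Module.finrank K (Fin 4 → K) = 4 := by simp
      have h4 : Module.finrank K (LinearMap.range A₂.mulVecLin) ≤ 3 := by
        have := Submodule.finrank_le (LinearMap.range A₂.mulVecLin)
        simpa using this
      rw [hbot] at h2
      simp [h3] at h2
      omega
    obtain ⟨c, hcmem, hc0⟩ := Submodule.exists_mem_ne_zero_of_ne_bot h1
    exact ⟨c, hcmem, hc0⟩
  have hA₂c : ∀ i, ∑ j, A₂ i j * c j = 0 := by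
    intro i
    have := congrFun hc i
    simpa [Matrix.mulVec, dotProduct] using this
  by_cases he : A₁.mulVec c = 0
  · -- both cameras kill c, so every 4×4 determinant vanishes and F = 0
    have hA₁c : ∀ i, ∑ j, A₁ i j * c j = 0 := by
      intro i
      have := congrFun he i
      simpa [Matrix.mulVec, dotProduct] using this
    have hF0 : F = 0 := by
      funext r s
      have hdet : (Matrix.of ![A₁ (s.succAbove 0), A₁ (s.succAbove 1),
                     A₂ (r.succAbove 0), A₂ (r.succAbove 1)]).det = 0 := by
        rw [← Matrix.exists_mulVec_eq_zero_iff]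
        refine ⟨c, hc0, ?_⟩
        funext i
        fin_cases i <;>
          simp [Matrix.mulVec, dotProduct, hA₁c, hA₂c]
      simp [hF, hdet]
    rw [hF0]
    simp
  · -- the epipole e = A₁ c is a nonzero kernel vector of F
    set e : Fin 3 → K := A₁.mulVec c with heq
    have hFe : F.mulVec e = 0 := by
      funext r
      have hu := hA₂c (r.succAbove 0)
      have hv := hA₂c (r.succAbove 1)
      have hk := key_s16 (A₁ 0) (A₁ 1) (A₁ 2) (A₂ (r.succAbove 0)) (A₂ (r.succAbove 1)) c hu hv
      have h0 : (0 : Fin 3).succAbove 0 = 1 := by decide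
      have h1 : (0 : Fin 3).succAbove 1 = 2 := by decide
      have h2 : (1 : Fin 3).succAbove 0 = 0 := by decide
      have h3 : (1 : Fin 3).succAbove 1 = 2 := by decide
      have h4 : (2 : Fin 3).succAbove 0 = 0 := by decide
      have h5 : (2 : Fin 3).succAbove 1 = 1 := by decide
      simp only [Matrix.mulVec, dotProduct, Fin.sum_univ_three, hF, Matrix.of_apply,
        heq, h0, h1, h2, h3, h4, h5, Pi.zero_apply,
        show ((0 : Fin 3) : ℕ) = 0 from rfl, show ((1 : Fin 3) : ℕ) = 1 from rfl,
        show ((2 : Fin 3) : ℕ) = 2 from rfl, pow_add]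
      linear_combination ((-1 : K) ^ ((r : ℕ))) * hk
    have hdetF : F.det = 0 := Matrix.exists_mulVec_eq_zero_iff.mp ⟨e, he, hFe⟩
    exact rank_le_two_of_det_eq_zero F hdetF
end
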